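/- arXiv:cs/0404055 — 6 statements merged into one kernel-verified Lean document; each statement's English description precedes it below -/
import Mathlib

section
/- Let σ ∈ RSubst. Then ↓σ coincides with the closure of σ under entailment in the theory RT; that is, ↓σ = {τ ∈ RSubst | RT ⊢ ∀(τ → σ)}, where τ and σ are read as the conjunctions of their equations. -/
/-!  Common infrastructure: finite and rational trees, substitutions in
rational solved form, the theory RT of rational trees, finiteness /
groundness operators, and Boolean functions over a set of variables of
interest. -/

/-- A signature: a type of function symbols with fixed arities. -/
structure Signature where
  Sym : Type
  arity : Sym → ℕ

/-- Finite terms over a signature, with variables drawn from `ℕ`. -/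
inductive HTerm (Sg : Signature) : Type where
  | var : ℕ → HTerm Sg
  | app : (f : Sg.Sym) → (Fin (Sg.arity f) → HTerm Sg) → HTerm Sg

namespace HTerm

variable {Sg : Signature}

/-- The set of variables occurring in a finite term. -/
def varsIn : HTerm Sg → Set ℕ
  | .var x => {x}
  | .app _ ts => ⋃ i, (ts i).varsIn

/-- Homomorphic application of a variable assignment to a finite term. -/
def substRaw (m : ℕ → HTerm Sg) : HTerm Sg → HTerm Sg
  | .var x => m x
  | .app f ts => .app f (fun i => (ts i).substRaw m)

/-- The label of the node of a finite term at a given path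
(`none` if there is no node at that path). -/
def labelAt : HTerm Sg → List ℕ → Option (Sg.Sym ⊕ ℕ)
  | .var x, [] => some (Sum.inr x)
  | .app f _, [] => some (Sum.inl f)
  | .var _, _ :: _ => none
  | .app f ts, i :: p => if h : i < Sg.arity f then (ts ⟨i, h⟩).labelAt p else none

end HTerm

/-- Substitutions: maps from variables to finite terms that are the identity
on all but finitely many variables. -/
structure Subst (Sg : Signature) where
  map : ℕ → HTerm Sg
  finite : {x : ℕ | map x ≠ HTerm.var x}.Finite

namespace Subst

variable {Sg : Signature}

/-- The domain of a substitution. -/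
def dom (σ : Subst Sg) : Set ℕ := {x | σ.map x ≠ HTerm.var x}

/-- Application of a substitution to a finite term. -/
def apply (σ : Subst Sg) (t : HTerm Sg) : HTerm Sg := t.substRaw σ.map

/-- `σ.iter i t` is `t σ^i`, the `i`-fold application of `σ` to `t`. -/
def iter (σ : Subst Sg) (i : ℕ) (t : HTerm Sg) : HTerm Sg := σ.apply^[i] t

/-- The set of variables occurring in the bindings of `σ`. -/
def varsOf (σ : Subst Sg) : Set ℕ := σ.dom ∪ ⋃ x ∈ σ.dom, (σ.map x).varsIn

/-- The number of bindings of `σ`. -/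
noncomputable def numBindings (σ : Subst Sg) : ℕ := σ.finite.toFinset.card

/-- The set of bindings of `σ`, as pairs (variable, term). -/
def bindings (σ : Subst Sg) : Set (ℕ × HTerm Sg) :=
  {p | p.1 ∈ σ.dom ∧ p.2 = σ.map p.1}

end Subst

/-- A set of bindings forms a circular substitution
`{x₁ ↦ x₂, …, x_{n-1} ↦ x_n, x_n ↦ x₁}` for some `n > 1` and
distinct variables `x₁, …, x_n`. -/
def IsCircularBindingSet {Sg : Signature} (S : Set (ℕ × HTerm Sg)) : Prop :=
  ∃ n : ℕ, 1 < n ∧ ∃ x : ℕ → ℕ,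
    (∀ i j, i < n → j < n → x i = x j → i = j) ∧
    S = {p | ∃ i < n, p = (x i, HTerm.var (x ((i + 1) % n)))}

/-- `σ` is in rational solved form: no subset of its bindings forms a
circular substitution.  `RSubst` is the set of such substitutions. -/
def Subst.InRSF {Sg : Signature} (σ : Subst Sg) : Prop :=
  ∀ S ⊆ σ.bindings, ¬ IsCircularBindingSet S

/-- Variable-idempotent substitutions:
`vars(tσσ) = vars(tσ)` for every finite term `t`. -/
def Subst.IsVSubst {Sg : Signature} (σ : Subst Sg) : Prop :=
  σ.InRSF ∧ ∀ t : HTerm Sg, (σ.apply (σ.apply t)).varsIn = (σ.apply t).varsIn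

/-- The finiteness functions `hvars_n`. -/
def Subst.hvarsN {Sg : Signature} (σ : Subst Sg) : ℕ → Set ℕ
  | 0 => {y | y ∉ σ.dom}
  | n + 1 => σ.hvarsN n ∪ {y | y ∈ σ.dom ∧ (σ.map y).varsIn ⊆ σ.hvarsN n}

/-- The finiteness operator `hvars` (the increasing chain `hvars_n` is
stationary, so its union equals its stationary value). -/
def Subst.hvars {Sg : Signature} (σ : Subst Sg) : Set ℕ := ⋃ n, σ.hvarsN n

/-- The occurrence functions `occ_n`. -/
def Subst.occN {Sg : Signature} (σ : Subst Sg) : ℕ → ℕ → Set ℕ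
  | 0, v => {v} \ σ.dom
  | n + 1, v => {y | ((σ.map y).varsIn ∩ σ.occN n v).Nonempty}

/-- The occurrence operator `occ`. -/
noncomputable def Subst.occ {Sg : Signature} (σ : Subst Sg) (v : ℕ) : Set ℕ :=
  σ.occN σ.numBindings v

/-- The groundness operator `gvars`. -/
noncomputable def Subst.gvars {Sg : Signature} (σ : Subst Sg) : Set ℕ :=
  {y | y ∈ σ.dom ∧ ∀ v ∈ σ.varsOf, y ∉ σ.occ v}

/-! Possibly infinite terms, represented by their labeling functions
(partial maps from finite paths to labels; a label is either a function
symbol or a variable). -/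

/-- The set of variables occurring in a possibly infinite term. -/
def treeVars {Sg : Signature} (u : List ℕ → Option (Sg.Sym ⊕ ℕ)) : Set ℕ :=
  {x | ∃ p, u p = some (Sum.inr x)}

/-- A possibly infinite term is finite (a member of `HTerms`) iff its set of
nodes is finite. -/
def treeFinite {Sg : Signature} (u : List ℕ → Option (Sg.Sym ⊕ ℕ)) : Prop :=
  {p | (u p).isSome}.Finite

/-- A possibly infinite term is linear iff each variable labels at most one
of its leaves. -/
def treeLinear {Sg : Signature} (u : List ℕ → Option (Sg.Sym ⊕ ℕ)) : Prop :=
  ∀ (y : ℕ) (p q : List ℕ),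
    u p = some (Sum.inr y) → u q = some (Sum.inr y) → p = q

/-- A variable `y` occurs linearly in a possibly infinite term iff it labels
exactly one of its leaves. -/
def occursLinearlyIn {Sg : Signature} (y : ℕ)
    (u : List ℕ → Option (Sg.Sym ⊕ ℕ)) : Prop :=
  ∃! p : List ℕ, u p = some (Sum.inr y)

/-- A possibly infinite term is a variable. -/
def treeIsVar {Sg : Signature} (u : List ℕ → Option (Sg.Sym ⊕ ℕ)) : Prop :=
  ∃ y : ℕ, u = (HTerm.var y : HTerm Sg).labelAt

/- `σ.rt t` is the limit of the converging sequence `t σ^i` of finite terms: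
its label at each path is the eventual (stable) label of the terms `t σ^i`
at that path. -/
open Classical in
noncomputable def Subst.rt {Sg : Signature} (σ : Subst Sg) (t : HTerm Sg) :
    List ℕ → Option (Sg.Sym ⊕ ℕ) := fun p =>
  if h : ∃ v : Option (Sg.Sym ⊕ ℕ), ∃ N : ℕ, ∀ i ≥ N, (σ.iter i t).labelAt p = v
  then h.choose else none

/-! The theory RT of rational trees, semantically. -/

/-- A first-order structure for the signature `Sg`. -/
structure Struc (Sg : Signature) where
  carrier : Type
  interp : (f : Sg.Sym) → (Fin (Sg.arity f) → carrier) → carrier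

/-- Evaluation of a finite term in a structure under a valuation. -/
def HTerm.eval {Sg : Signature} (A : Struc Sg) (v : ℕ → A.carrier) :
    HTerm Sg → A.carrier
  | .var x => v x
  | .app f ts => A.interp f (fun i => (ts i).eval A v)

/-- Sets of equations between finite terms. -/
abbrev EqSet (Sg : Signature) := Set (HTerm Sg × HTerm Sg)

/-- A valuation satisfies a set of equations (read as their conjunction). -/
def Struc.Sat {Sg : Signature} (A : Struc Sg) (v : ℕ → A.carrier)
    (E : EqSet Sg) : Prop :=
  ∀ e ∈ E, e.1.eval A v = e.2.eval A v

/-- A substitution read as the set of equations `x = σ(x)`, `x ∈ dom σ`. -/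
def Subst.eqs {Sg : Signature} (σ : Subst Sg) : EqSet Sg :=
  {e | ∃ x ∈ σ.dom, e = (HTerm.var x, σ.map x)}

/-- The variables occurring in a set of equations. -/
def eqsVars {Sg : Signature} (E : EqSet Sg) : Set ℕ :=
  ⋃ e ∈ E, (e.1.varsIn ∪ e.2.varsIn)

/-- A model of the theory RT of rational trees: a structure satisfying the
identity axioms (injectivity of each function symbol and distinctness of the
ranges of distinct function symbols) and, for each substitution in rational
solved form, the corresponding uniqueness axiom. -/
structure RTModel (Sg : Signature) where
  struc : Struc Sg
  inj : ∀ (f : Sg.Sym) (a b : Fin (Sg.arity f) → struc.carrier),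
    struc.interp f a = struc.interp f b → a = b
  distinct : ∀ (f g : Sg.Sym) (a : Fin (Sg.arity f) → struc.carrier)
    (b : Fin (Sg.arity g) → struc.carrier), f ≠ g → struc.interp f a ≠ struc.interp g b
  uniqueness : ∀ σ : Subst Sg, σ.InRSF → ∀ v : ℕ → struc.carrier,
    ∃! w : ℕ → struc.carrier,
      (∀ x ∉ σ.dom, w x = v x) ∧ struc.Sat w σ.eqs

/-- `RT ⊢ ∀(E → F)`. -/
def RTImp {Sg : Signature} (E F : EqSet Sg) : Prop :=
  ∀ (A : RTModel Sg) (v : ℕ → A.struc.carrier), A.struc.Sat v E → A.struc.Sat v F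

/-- `RT ⊢ ∀(E ↔ F)`. -/
def RTEquiv {Sg : Signature} (E F : EqSet Sg) : Prop :=
  ∀ (A : RTModel Sg) (v : ℕ → A.struc.carrier), A.struc.Sat v E ↔ A.struc.Sat v F

/-- The set of relevant most general solutions of a set of equations in RT. -/
def mgsRT {Sg : Signature} (E : EqSet Sg) : Set (Subst Sg) :=
  {σ | σ.InRSF ∧ RTEquiv σ.eqs E ∧ σ.varsOf ⊆ eqsVars E}

/-- `↓σ`: the substitutions obtainable as most general solutions of `σ`
together with some further set of equations in rational solved form. -/
def downRT {Sg : Signature} (σ : Subst Sg) : Set (Subst Sg) :=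
  {τ | ∃ σ' : Subst Sg, σ'.InRSF ∧ τ ∈ mgsRT (σ.eqs ∪ σ'.eqs)}

/-- Two valuations agree outside a set `W` of variables. -/
def agreesOff {α : Type _} (W : Set ℕ) (v w : ℕ → α) : Prop :=
  ∀ x ∉ W, v x = w x

/-- `RT ⊢ ∀(∃W.E ↔ ∃W.F)`. -/
def RTExistsEquiv {Sg : Signature} (W : Set ℕ) (E F : EqSet Sg) : Prop :=
  ∀ (A : RTModel Sg) (v : ℕ → A.struc.carrier),
    (∃ w, agreesOff W w v ∧ A.struc.Sat w E) ↔
    (∃ w, agreesOff W w v ∧ A.struc.Sat w F)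

/-- `∃∃x.{σ}` relative to the set `VI` of the variables of interest:
the substitutions `σ'` in rational solved form with
`RT ⊢ ∀(∃ (Vars ∖ VI) . (σ' ↔ ∃x.σ))`. -/
def projExists {Sg : Signature} (VI : Set ℕ) (x : ℕ) (σ : Subst Sg) :
    Set (Subst Sg) :=
  {σ' | σ'.InRSF ∧ ∀ (A : RTModel Sg) (v : ℕ → A.struc.carrier),
    ∃ w, agreesOff VIᶜ w v ∧
      (A.struc.Sat w σ'.eqs ↔ ∃ u, agreesOff {x} u w ∧ A.struc.Sat u σ.eqs)}

/-- `∃∃x.Σ` for a set `Σ` of substitutions. -/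
def projExistsSet {Sg : Signature} (VI : Set ℕ) (x : ℕ) (S : Set (Subst Sg)) :
    Set (Subst Sg) := ⋃ σ ∈ S, projExists VI x σ

/-! Boolean valuations and Boolean functions over the variables of
interest (semantically: only the values on `VI` matter). -/

abbrev BVal := ℕ → Prop
abbrev BFun := BVal → Prop

/-- Entailment `φ ⊨ ψ` of Boolean functions. -/
def BFun.Entails (φ ψ : BFun) : Prop := ∀ a, φ a → ψ a

/-- The Boolean function of a variable. -/
def bVar (x : ℕ) : BFun := fun a => a x

def bAnd (φ ψ : BFun) : BFun := fun a => φ a ∧ ψ a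
def bOr (φ ψ : BFun) : BFun := fun a => φ a ∨ ψ a
def bNot (φ : BFun) : BFun := fun a => ¬ φ a
def bIff (φ ψ : BFun) : BFun := fun a => φ a ↔ ψ a

/-- `⋀S`: the conjunction of the variables in `S` (`⊤` if `S = ∅`). -/
def bConj (S : Set ℕ) : BFun := fun a => ∀ x ∈ S, a x

/-- `∃x.φ = φ[1/x] ∨ φ[0/x]` (Schröder's elimination principle). -/
def bExists (x : ℕ) (φ : BFun) : BFun :=
  fun a => φ (Function.update a x True) ∨ φ (Function.update a x False)

/-- `∃S.φ`: elimination of all the variables of `S`. -/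
def bExistsSet (S : Set ℕ) (φ : BFun) : BFun :=
  fun a => ∃ b : BVal, (∀ x ∉ S, b x = a x) ∧ φ b

/-- `true(φ)`: the variables of `VI` necessarily true for `φ`. -/
def trueVars (VI : Set ℕ) (φ : BFun) : Set ℕ := {x ∈ VI | ∀ a, φ a → a x}

/-- `false(φ)`: the variables of `VI` necessarily false for `φ`. -/
def falseVars (VI : Set ℕ) (φ : BFun) : Set ℕ := {x ∈ VI | ∀ a, φ a → ¬ a x}

/-- `φ ∈ Pos`: `φ` is true under the everything-is-true assignment. -/
def IsPos (φ : BFun) : Prop := φ (fun _ => True)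

/-- `pos(φ) = φ ∨ ⋀VI`. -/
def bPos (VI : Set ℕ) (φ : BFun) : BFun := bOr φ (bConj VI)

/-- `hval(σ)`: the valuation assigning true exactly to the variables of
`hvars(σ)`. -/
def Subst.hval {Sg : Signature} (σ : Subst Sg) : BVal := fun x => x ∈ σ.hvars

/-- `gval(σ)`: the valuation assigning true exactly to the variables of
`gvars(σ)`. -/
noncomputable def Subst.gval {Sg : Signature} (σ : Subst Sg) : BVal :=
  fun x => x ∈ σ.gvars

/-- `γ_H(h)`. -/
def gammaH {Sg : Signature} (h : Set ℕ) : Set (Subst Sg) :=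
  {σ | σ.InRSF ∧ h ⊆ σ.hvars}

/-- `γ_FD(φ)`. -/
def gammaFD {Sg : Signature} (φ : BFun) : Set (Subst Sg) :=
  {σ | σ.InRSF ∧ ∀ τ ∈ downRT σ, φ τ.hval}

/-- `γ_GD(ψ)`. -/
noncomputable def gammaGD {Sg : Signature} (ψ : BFun) : Set (Subst Sg) :=
  {σ | σ.InRSF ∧ ∀ τ ∈ downRT σ, ψ τ.gval}

/-- The substitution consisting of the single binding `x ↦ t`. -/
def singleSubst {Sg : Signature} (x : ℕ) (t : HTerm Sg) : Subst Sg where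
  map := fun y => if y = x then t else HTerm.var y
  finite := Set.Finite.subset (Set.finite_singleton x) (fun y hy => by
    by_contra hxy
    rw [Set.mem_singleton_iff] at hxy
    simp only [Set.mem_setOf_eq] at hy
    exact hy (if_neg hxy))

/-- For `σ ∈ RSubst`, `↓σ` coincides with the closure of `σ`
under entailment in RT: `↓σ = {τ ∈ RSubst | RT ⊢ ∀(τ → σ)}`. -/
theorem down_eq_entailment_closure
    (Sg : Signature) (hconst : ∃ f, Sg.arity f = 0) (hposar : ∃ f, 0 < Sg.arity f)
    (σ : Subst Sg) (hσ : σ.InRSF) :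
    downRT σ = {τ : Subst Sg | τ.InRSF ∧ RTImp τ.eqs σ.eqs} := by
  ext τ
  constructor
  · rintro ⟨σ', hσ', hrsf, hequiv, hvars⟩
    refine ⟨hrsf, fun A v hv e he => ?_⟩
    exact ((hequiv A v).mp hv) e (Set.mem_union_left _ he)
  · rintro ⟨hrsf, himp⟩
    refine ⟨τ, hrsf, hrsf, ?_, ?_⟩
    · intro A v
      constructor
      · intro hv e he
        rcases he with h | h
        · exact himp A v hv e h
        · exact hv e h
      · intro hv e he
        exact hv e (Set.mem_union_right _ he)
    · intro y hy
      rcases hy with hy | hy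
      · -- y ∈ τ.dom
        refine Set.mem_biUnion (Set.mem_union_right _ ⟨y, hy, rfl⟩) ?_
        exact Set.mem_union_left _ rfl
      · simp only [Set.mem_iUnion] at hy
        obtain ⟨x, hx, hyx⟩ := hy
        refine Set.mem_biUnion (Set.mem_union_right _ ⟨x, hx, rfl⟩) ?_
        exact Set.mem_union_right _ hyx
end

section
/- Let σ ∈ RSubst and x ∈ Vars. Then x ∈ hvars(σ) if and only if rt(x, σ) is a finite term (rt(x, σ) ∈ HTerms). -/
/-! ### Auxiliary lemmas for STATEMENT 1 -/

namespace MHIRF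

variable {Sg : Signature}

lemma labelAt_nil (t : HTerm Sg) : ∃ v, t.labelAt [] = some v := by
  cases t <;> exact ⟨_, rfl⟩

lemma substRaw_id (t : HTerm Sg) (m : ℕ → HTerm Sg)
    (h : ∀ z ∈ t.varsIn, m z = HTerm.var z) : t.substRaw m = t := by
  induction t with
  | var x => exact h x rfl
  | app f ts ih =>
    simp only [HTerm.substRaw]
    congr 1
    funext i
    exact ih i (fun z hz => h z (Set.mem_iUnion.2 ⟨i, hz⟩))

lemma substRaw_substRaw (t : HTerm Sg) (m m' : ℕ → HTerm Sg) :
    (t.substRaw m).substRaw m' = t.substRaw (fun z => (m z).substRaw m') := by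
  induction t with
  | var x => rfl
  | app f ts ih =>
    simp only [HTerm.substRaw]
    congr 1
    funext i
    exact ih i

lemma iter_zero (σ : Subst Sg) (t : HTerm Sg) : σ.iter 0 t = t := rfl

lemma iter_succ (σ : Subst Sg) (i : ℕ) (t : HTerm Sg) :
    σ.iter (i + 1) t = σ.iter i (σ.apply t) :=
  Function.iterate_succ_apply _ _ _

lemma iter_succ' (σ : Subst Sg) (i : ℕ) (t : HTerm Sg) :
    σ.iter (i + 1) t = σ.apply (σ.iter i t) :=
  Function.iterate_succ_apply' _ _ _

lemma iter_add (σ : Subst Sg) (k i : ℕ) (t : HTerm Sg) :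
    σ.iter (k + i) t = σ.iter k (σ.iter i t) :=
  Function.iterate_add_apply _ _ _ _

lemma iter_eq_substRaw (σ : Subst Sg) (i : ℕ) (t : HTerm Sg) :
    σ.iter i t = t.substRaw (fun z => σ.iter i (HTerm.var z)) := by
  induction i with
  | zero => exact (substRaw_id t _ (fun z _ => rfl)).symm
  | succ i ih =>
    rw [iter_succ', ih]
    show (t.substRaw _).substRaw σ.map = _
    rw [substRaw_substRaw]
    congr 1
    funext z
    exact (iter_succ' σ i (HTerm.var z)).symm

lemma varsIn_substRaw (t : HTerm Sg) (m : ℕ → HTerm Sg) :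
    (t.substRaw m).varsIn = ⋃ z ∈ t.varsIn, (m z).varsIn := by
  induction t with
  | var x => simp [HTerm.substRaw, HTerm.varsIn]
  | app f ts ih =>
    simp only [HTerm.substRaw, HTerm.varsIn, ih]
    ext y
    simp only [Set.mem_iUnion]
    constructor
    · rintro ⟨i, z, hz, hy⟩; exact ⟨z, ⟨i, hz⟩, hy⟩
    · rintro ⟨z, ⟨i, hz⟩, hy⟩; exact ⟨i, z, hz, hy⟩

lemma varsIn_finite (t : HTerm Sg) : t.varsIn.Finite := by
  induction t with
  | var x => exact Set.finite_singleton x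
  | app f ts ih => exact Set.finite_iUnion ih

lemma nodes_finite (t : HTerm Sg) : {p | (t.labelAt p).isSome}.Finite := by
  induction t with
  | var x =>
    apply Set.Finite.subset (Set.finite_singleton ([] : List ℕ))
    rintro (_ | ⟨i, p⟩) hp
    · exact rfl
    · simp [HTerm.labelAt] at hp
  | app f ts ih =>
    have hsub : {p | ((HTerm.app f ts).labelAt p).isSome} ⊆
        insert [] (⋃ i : Fin (Sg.arity f),
          (fun p => (i : ℕ) :: p) '' {p | ((ts i).labelAt p).isSome}) := by
      rintro (_ | ⟨i, p⟩) hp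
      · exact Set.mem_insert _ _
      · simp only [Set.mem_setOf_eq, HTerm.labelAt] at hp
        by_cases h : i < Sg.arity f
        · rw [dif_pos h] at hp
          exact Set.mem_insert_of_mem _ (Set.mem_iUnion.2 ⟨⟨i, h⟩, ⟨p, hp, rfl⟩⟩)
        · rw [dif_neg h] at hp; simp at hp
    exact Set.Finite.subset
      ((Set.finite_iUnion (fun i => ((ih i).image _))).insert _) hsub

lemma labelAt_substRaw_append (m : ℕ → HTerm Sg) :
    ∀ (u : HTerm Sg) (p : List ℕ) (y : ℕ), u.labelAt p = some (Sum.inr y) →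
      ∀ q, (u.substRaw m).labelAt (p ++ q) = (m y).labelAt q := by
  intro u
  induction u with
  | var x =>
    intro p y h q
    cases p with
    | nil =>
      simp only [HTerm.labelAt, Option.some.injEq, Sum.inr.injEq] at h
      subst h; rfl
    | cons i p => simp [HTerm.labelAt] at h
  | app f ts ih =>
    intro p y h q
    cases p with
    | nil => simp [HTerm.labelAt] at h
    | cons i p =>
      simp only [HTerm.labelAt] at h
      by_cases hi : i < Sg.arity f
      · rw [dif_pos hi] at h
        show (HTerm.app f (fun j => (ts j).substRaw m)).labelAt ((i :: p) ++ q) = _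
        simp only [List.cons_append, HTerm.labelAt, dif_pos hi]
        exact ih _ p y h q
      · rw [dif_neg hi] at h; exact absurd h (by simp)

lemma labelAt_substRaw_inl (m : ℕ → HTerm Sg) :
    ∀ (u : HTerm Sg) (p : List ℕ) (f : Sg.Sym), u.labelAt p = some (Sum.inl f) →
      (u.substRaw m).labelAt p = some (Sum.inl f) := by
  intro u
  induction u with
  | var x =>
    intro p f h
    cases p <;> simp [HTerm.labelAt] at h
  | app g ts ih =>
    intro p f h
    cases p with
    | nil => exact h
    | cons i p =>
      simp only [HTerm.labelAt] at h ⊢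
      by_cases hi : i < Sg.arity g
      · rw [dif_pos hi] at h
        show (HTerm.app g (fun j => (ts j).substRaw m)).labelAt (i :: p) = _
        simp only [HTerm.labelAt, dif_pos hi]
        exact ih _ p f h
      · rw [dif_neg hi] at h; exact absurd h (by simp)

lemma labelAt_substRaw_isSome (m : ℕ → HTerm Sg) (u : HTerm Sg) (p : List ℕ)
    (h : (u.labelAt p).isSome) : ((u.substRaw m).labelAt p).isSome := by
  obtain ⟨v, hv⟩ := Option.isSome_iff_exists.1 h
  cases v with
  | inl f => rw [labelAt_substRaw_inl m u p f hv]; rfl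
  | inr y =>
    have h2 := labelAt_substRaw_append m u p y hv []
    rw [List.append_nil] at h2
    rw [h2]
    obtain ⟨w, hw⟩ := labelAt_nil (m y)
    rw [hw]; rfl

lemma exists_path_of_mem_varsIn :
    ∀ (t : HTerm Sg) (y : ℕ), y ∈ t.varsIn →
      ∃ p, t.labelAt p = some (Sum.inr y) := by
  intro t
  induction t with
  | var x =>
    intro y hy
    rw [Set.mem_singleton_iff.1 hy]
    exact ⟨[], rfl⟩
  | app f ts ih =>
    intro y hy
    obtain ⟨i, hi⟩ := Set.mem_iUnion.1 hy
    obtain ⟨p, hp⟩ := ih i y hi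
    refine ⟨(i : ℕ) :: p, ?_⟩
    show (if h : (i : ℕ) < Sg.arity f then (ts ⟨i, h⟩).labelAt p else none) = _
    rw [dif_pos i.isLt]
    simpa using hp

lemma hvarsN_mono (σ : Subst Sg) : Monotone σ.hvarsN :=
  monotone_nat_of_le_succ (fun n => Set.subset_union_left)

lemma mem_dom_of_not_hvars {σ : Subst Sg} {x : ℕ} (hx : x ∉ σ.hvars) :
    x ∈ σ.dom := by
  by_contra h
  exact hx (Set.mem_iUnion.2 ⟨0, h⟩)

lemma subset_hvarsN_of_finite (σ : Subst Sg) (S : Set ℕ) (hS : S.Finite) :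
    S ⊆ σ.hvars → ∃ n, S ⊆ σ.hvarsN n := by
  refine Set.Finite.induction_on (motive := fun S _ => S ⊆ σ.hvars → ∃ n, S ⊆ σ.hvarsN n)
    S hS (fun _ => ⟨0, by simp⟩) ?_
  intro a S ha hSf ih h
  obtain ⟨n, hn⟩ := ih (fun z hz => h (Set.mem_insert_of_mem _ hz))
  obtain ⟨m, hm⟩ := Set.mem_iUnion.1 (h (Set.mem_insert _ _))
  refine ⟨max n m, ?_⟩
  rintro z (rfl | hz)
  · exact hvarsN_mono σ (le_max_right n m) hm
  · exact hvarsN_mono σ (le_max_left n m) (hn hz)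

lemma exists_not_hvars_aux {σ : Subst Sg} {x : ℕ} (hx : x ∉ σ.hvars) :
    ∃ z ∈ (σ.map x).varsIn, z ∉ σ.hvars := by
  by_contra h
  push_neg at h
  obtain ⟨n, hn⟩ := subset_hvarsN_of_finite σ _ (varsIn_finite (σ.map x)) h
  exact hx (Set.mem_iUnion.2 ⟨n + 1, Or.inr ⟨mem_dom_of_not_hvars hx, hn⟩⟩)

lemma no_var_chain (σ : Subst Sg) (hσ : σ.InRSF) :
    ¬ ∃ g : ℕ → ℕ, ∀ j, g j ∈ σ.dom ∧ σ.map (g j) = HTerm.var (g (j + 1)) := by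
  classical
  rintro ⟨g, hg⟩
  have hninj : ¬ Function.Injective g := by
    intro hinj
    exact Set.infinite_range_of_injective hinj
      (Set.Finite.subset σ.finite (Set.range_subset_iff.2 fun j => (hg j).1))
  obtain ⟨a0, b0, hab0, hne0⟩ := Function.not_injective_iff.1 hninj
  have hP : ∃ b, ∃ a < b, g a = g b := by
    rcases Nat.lt_or_ge a0 b0 with h | h
    · exact ⟨b0, a0, h, hab0⟩
    · exact ⟨a0, b0, lt_of_le_of_ne h (Ne.symm hne0), hab0.symm⟩
  obtain ⟨a, hab, hgab⟩ := Nat.find_spec hP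
  set b := Nat.find hP with hb_def
  have hmin : ∀ c < b, ¬ ∃ a < c, g a = g c := fun c hc => Nat.find_min hP hc
  have hinjb : ∀ i j, i < b → j < b → g i = g j → i = j := by
    intro i j hi hj hij
    by_contra hne
    rcases Nat.lt_or_ge i j with h | h
    · exact hmin j hj ⟨i, h, hij⟩
    · exact hmin i hi ⟨j, lt_of_le_of_ne h (Ne.symm hne), hij.symm⟩
  set n := b - a with hn_def
  have hn1 : 1 ≤ n := by omega
  rcases Nat.lt_or_ge 1 n with hn2 | hn2
  · -- n ≥ 2 : circular set
    set xf : ℕ → ℕ := fun i => g (a + i) with hxf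
    refine hσ {p | ∃ i < n, p = (xf i, HTerm.var (xf ((i + 1) % n)))} ?_
      ⟨n, hn2, xf, ?_, rfl⟩
    · rintro ⟨y, t⟩ ⟨i, hi, hp⟩
      rw [hp]
      have hx1 : xf ((i + 1) % n) = g (a + i + 1) := by
        rcases Nat.lt_or_ge (i + 1) n with h | h
        · rw [Nat.mod_eq_of_lt h, hxf]; ring_nf
        · have hin : i + 1 = n := by omega
          rw [hin, Nat.mod_self, hxf]
          show g (a + 0) = g (a + i + 1)
          have hib : a + i + 1 = b := by omega
          rw [hib, Nat.add_zero, hgab]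
      refine ⟨(hg (a + i)).1, ?_⟩
      show HTerm.var (xf ((i + 1) % n)) = σ.map (g (a + i))
      rw [hx1]
      exact (hg (a + i)).2.symm
    · intro i j hi hj hij
      have := hinjb (a + i) (a + j) (by omega) (by omega) hij
      omega
  · -- n = 1 : self loop, contradiction with dom
    have hn : n = 1 := le_antisymm hn2 hn1
    have hb : b = a + 1 := by omega
    have := (hg a).2
    rw [hb] at hgab
    rw [← hgab] at this
    exact (hg a).1 this

/-- Local failure of "there is a deeper non-hvars variable". -/
def BadA (σ : Subst Sg) (z : ℕ) : Prop :=
  ∀ (k : ℕ) (q : List ℕ) (w : ℕ), q ≠ [] →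
    (σ.iter k (HTerm.var z)).labelAt q = some (Sum.inr w) → w ∈ σ.hvars

lemma apply_var (σ : Subst Sg) (z : ℕ) : σ.apply (HTerm.var z) = σ.map z := rfl

lemma iter_one_var (σ : Subst Sg) (z : ℕ) :
    σ.iter 1 (HTerm.var z) = σ.map z := rfl

lemma badA_step {σ : Subst Sg} {z w : ℕ} (hz : BadA σ z)
    (hw : σ.map z = HTerm.var w) : BadA σ w := by
  intro k q w' hq hlab
  refine hz (k + 1) q w' hq ?_
  rw [iter_succ, apply_var, hw]
  exact hlab

lemma step_var {σ : Subst Sg} {z : ℕ} (hσ : σ.InRSF)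
    (hz : z ∉ σ.hvars) (hbad : BadA σ z) :
    ∃ w, σ.map z = HTerm.var w ∧ w ∉ σ.hvars ∧ BadA σ w := by
  obtain ⟨w, hw, hwh⟩ := exists_not_hvars_aux hz
  obtain ⟨q, hq⟩ := exists_path_of_mem_varsIn (σ.map z) w hw
  cases hmap : σ.map z with
  | var v =>
    rw [hmap] at hq
    cases q with
    | nil =>
      simp only [HTerm.labelAt, Option.some.injEq, Sum.inr.injEq] at hq
      have hmap' : σ.map z = HTerm.var w := by rw [hmap, hq]
      exact ⟨w, by rw [hq], hwh, badA_step hbad hmap'⟩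
    | cons i q => simp [HTerm.labelAt] at hq
  | app f ts =>
    exfalso
    have hqne : q ≠ [] := by
      intro h
      rw [h, hmap] at hq
      simp [HTerm.labelAt] at hq
    refine hwh (hbad 1 q w hqne ?_)
    rw [iter_one_var]
    exact hq

open Classical in
/-- The variable-chain step function. -/
noncomputable def chainStep (σ : Subst Sg) (y : ℕ) : ℕ :=
  if h : ∃ w, σ.map y = HTerm.var w then h.choose else y

lemma chainStep_spec {σ : Subst Sg} (hσ : σ.InRSF) {y : ℕ}
    (h1 : y ∉ σ.hvars) (h2 : BadA σ y) :
    σ.map y = HTerm.var (chainStep σ y) ∧ chainStep σ y ∉ σ.hvars ∧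
      BadA σ (chainStep σ y) := by
  obtain ⟨w, hw, hwnh, hwb⟩ := step_var hσ h1 h2
  have hch : chainStep σ y = w := by
    rw [chainStep, dif_pos ⟨w, hw⟩]
    have hs := (⟨w, hw⟩ : ∃ u, σ.map y = HTerm.var u).choose_spec
    exact HTerm.var.inj (hs.symm.trans hw)
  rw [hch]
  exact ⟨hw, hwnh, hwb⟩

lemma claimA (σ : Subst Sg) (hσ : σ.InRSF) (z : ℕ) (hz : z ∉ σ.hvars) :
    ∃ (k : ℕ) (q : List ℕ) (w : ℕ), q ≠ [] ∧
      (σ.iter k (HTerm.var z)).labelAt q = some (Sum.inr w) ∧ w ∉ σ.hvars := by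
  by_contra hA
  push_neg at hA
  have hbad : BadA σ z := fun k q w hq hl => hA k q w hq hl
  set g : ℕ → ℕ := fun j => (chainStep σ)^[j] z with hg_def
  have hsucc : ∀ j, g (j + 1) = chainStep σ (g j) := fun j =>
    Function.iterate_succ_apply' _ _ _
  have key : ∀ j, g j ∉ σ.hvars ∧ BadA σ (g j) := by
    intro j
    induction j with
    | zero => exact ⟨hz, hbad⟩
    | succ j ih =>
      obtain ⟨_, h2, h3⟩ := chainStep_spec hσ ih.1 ih.2
      rw [hsucc j]
      exact ⟨h2, h3⟩
  refine no_var_chain σ hσ ⟨g, fun j => ⟨mem_dom_of_not_hvars (key j).1, ?_⟩⟩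
  rw [hsucc j]
  exact (chainStep_spec hσ (key j).1 (key j).2).1

lemma labelAt_isSome_mono (σ : Subst Sg) (t : HTerm Sg) (p : List ℕ)
    {i j : ℕ} (hij : i ≤ j) (h : ((σ.iter i t).labelAt p).isSome) :
    ((σ.iter j t).labelAt p).isSome := by
  induction j, hij using Nat.le_induction with
  | base => exact h
  | succ j hij ih =>
    rw [iter_succ']
    exact labelAt_substRaw_isSome σ.map _ p ih

lemma labelAt_apply_of_inr (σ : Subst Sg) {u : HTerm Sg} {p : List ℕ} {y : ℕ}
    (h : u.labelAt p = some (Sum.inr y)) :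
    (σ.apply u).labelAt p = (σ.map y).labelAt [] := by
  have := labelAt_substRaw_append σ.map u p y h []
  rwa [List.append_nil] at this

lemma labelAt_stable_inl (σ : Subst Sg) (t : HTerm Sg) (p : List ℕ) (f : Sg.Sym)
    {i : ℕ} (h : (σ.iter i t).labelAt p = some (Sum.inl f)) :
    ∀ j ≥ i, (σ.iter j t).labelAt p = some (Sum.inl f) := by
  intro j hij
  induction j, hij using Nat.le_induction with
  | base => exact h
  | succ j hij ih =>
    rw [iter_succ']
    exact labelAt_substRaw_inl σ.map _ p f ih

lemma labelAt_stable_inr_notdom (σ : Subst Sg) (t : HTerm Sg) (p : List ℕ)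
    {y : ℕ} (hy : y ∉ σ.dom) {i : ℕ}
    (h : (σ.iter i t).labelAt p = some (Sum.inr y)) :
    ∀ j ≥ i, (σ.iter j t).labelAt p = some (Sum.inr y) := by
  intro j hij
  induction j, hij using Nat.le_induction with
  | base => exact h
  | succ j hij ih =>
    rw [iter_succ', labelAt_apply_of_inr σ ih]
    have : σ.map y = HTerm.var y := not_not.1 hy
    rw [this]
    rfl

lemma eventually_stable (σ : Subst Sg) (hσ : σ.InRSF) (t : HTerm Sg)
    (p : List ℕ) :
    ∃ (v : Option (Sg.Sym ⊕ ℕ)) (N : ℕ), ∀ i ≥ N,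
      (σ.iter i t).labelAt p = v := by
  by_contra h
  push_neg at h
  obtain ⟨i0, _, hne⟩ := h none 0
  have hsome0 : ((σ.iter i0 t).labelAt p).isSome := Option.ne_none_iff_isSome.1 hne
  have claim : ∀ d : ℕ, ∃ y, (σ.iter (i0 + d) t).labelAt p = some (Sum.inr y) ∧
      y ∈ σ.dom := by
    intro d
    have hsome : ((σ.iter (i0 + d) t).labelAt p).isSome :=
      labelAt_isSome_mono σ t p (Nat.le_add_right _ _) hsome0
    obtain ⟨v, hv⟩ := Option.isSome_iff_exists.1 hsome
    cases v with
    | inl f =>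
      exfalso
      obtain ⟨j, hj, hjne⟩ := h (some (Sum.inl f)) (i0 + d)
      exact hjne (labelAt_stable_inl σ t p f hv j hj)
    | inr y =>
      by_cases hy : y ∈ σ.dom
      · exact ⟨y, hv, hy⟩
      · exfalso
        obtain ⟨j, hj, hjne⟩ := h (some (Sum.inr y)) (i0 + d)
        exact hjne (labelAt_stable_inr_notdom σ t p hy hv j hj)
  classical
  set g : ℕ → ℕ := fun d => (claim d).choose with hg
  refine no_var_chain σ hσ ⟨g, fun d => ⟨(claim d).choose_spec.2, ?_⟩⟩
  have h1 : (σ.iter (i0 + d) t).labelAt p = some (Sum.inr (g d)) :=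
    (claim d).choose_spec.1
  have h2 : (σ.iter (i0 + (d + 1)) t).labelAt p = some (Sum.inr (g (d + 1))) :=
    (claim (d + 1)).choose_spec.1
  have h3 : (σ.iter (i0 + d + 1) t).labelAt p = (σ.map (g d)).labelAt [] := by
    rw [iter_succ']
    exact labelAt_apply_of_inr σ h1
  rw [show i0 + (d + 1) = i0 + d + 1 by omega, h3] at h2
  cases hm : σ.map (g d) with
  | var w =>
    rw [hm] at h2
    simp only [HTerm.labelAt, Option.some.injEq, Sum.inr.injEq] at h2
    rw [h2]
  | app f ts =>
    rw [hm] at h2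
    simp [HTerm.labelAt] at h2

lemma rt_eq (σ : Subst Sg) (t : HTerm Sg) (p : List ℕ)
    (v : Option (Sg.Sym ⊕ ℕ)) (N : ℕ)
    (h : ∀ i ≥ N, (σ.iter i t).labelAt p = v) : σ.rt t p = v := by
  have hx : ∃ v' : Option (Sg.Sym ⊕ ℕ), ∃ N', ∀ i ≥ N',
      (σ.iter i t).labelAt p = v' := ⟨v, N, h⟩
  unfold Subst.rt
  rw [dif_pos hx]
  obtain ⟨N', hN'⟩ := hx.choose_spec
  have h2 := hN' (max N N') (le_max_right _ _)
  rw [h (max N N') (le_max_left _ _)] at h2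
  exact h2.symm

lemma claimF (σ : Subst Sg) : ∀ n, ∀ y ∈ σ.hvarsN n,
    ∀ z ∈ (σ.iter n (HTerm.var y)).varsIn, z ∉ σ.dom := by
  intro n
  induction n with
  | zero =>
    intro y hy z hz
    rw [iter_zero] at hz
    rw [Set.mem_singleton_iff.1 hz]
    exact hy
  | succ n ih =>
    intro y hy z hz
    rcases hy with hy | ⟨hydom, hsub⟩
    · have heq : σ.iter (n + 1) (HTerm.var y) = σ.iter n (HTerm.var y) := by
        rw [iter_succ']
        exact substRaw_id _ _ (fun w hw => not_not.1 (ih y hy w hw))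
      rw [heq] at hz
      exact ih y hy z hz
    · have heq : σ.iter (n + 1) (HTerm.var y) = σ.iter n (σ.map y) := by
        rw [iter_succ, apply_var]
      rw [heq, iter_eq_substRaw, varsIn_substRaw] at hz
      simp only [Set.mem_iUnion] at hz
      obtain ⟨w, hw, hzw⟩ := hz
      exact ih w (hsub hw) z hzw

end MHIRF

/-- For `σ ∈ RSubst` and a variable `x`, `x ∈ hvars(σ)` iff
`rt(x, σ)` is a finite term. -/
theorem mem_hvars_iff_rt_finite
    (Sg : Signature) (hconst : ∃ f, Sg.arity f = 0) (hposar : ∃ f, 0 < Sg.arity f)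
    (σ : Subst Sg) (hσ : σ.InRSF) (x : ℕ) :
    x ∈ σ.hvars ↔ treeFinite (σ.rt (HTerm.var x)) := by
  constructor
  · intro hx
    obtain ⟨n, hn⟩ := Set.mem_iUnion.1 hx
    have hstab : ∀ i ≥ n, σ.iter i (HTerm.var x) = σ.iter n (HTerm.var x) := by
      intro i hi
      induction i, hi using Nat.le_induction with
      | base => rfl
      | succ i hi ih =>
        rw [MHIRF.iter_succ', ih]
        exact MHIRF.substRaw_id _ _
          (fun w hw => not_not.1 (MHIRF.claimF σ n x hn w hw))
    have hrt : ∀ p, σ.rt (HTerm.var x) p = (σ.iter n (HTerm.var x)).labelAt p :=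
      fun p => MHIRF.rt_eq σ _ p _ n (fun i hi => by rw [hstab i hi])
    have hset : {p | ((σ.rt (HTerm.var x)) p).isSome} =
        {p | ((σ.iter n (HTerm.var x)).labelAt p).isSome} := by
      ext p; simp only [Set.mem_setOf_eq, hrt p]
    show {p | ((σ.rt (HTerm.var x)) p).isSome}.Finite
    rw [hset]
    exact MHIRF.nodes_finite _
  · intro hfin
    by_contra hx
    have hfin' : {p | ((σ.rt (HTerm.var x)) p).isSome}.Finite := hfin
    have key : ∀ n : ℕ, ∃ (p : List ℕ) (i z : ℕ),
        n ≤ p.length ∧ (σ.iter i (HTerm.var x)).labelAt p = some (Sum.inr z) ∧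
        z ∉ σ.hvars := by
      intro n
      induction n with
      | zero => exact ⟨[], 0, x, Nat.zero_le _, rfl, hx⟩
      | succ n ih =>
        obtain ⟨p, i, z, hlen, hlab, hz⟩ := ih
        obtain ⟨k, q, w, hq, hlab', hw⟩ := MHIRF.claimA σ hσ z hz
        refine ⟨p ++ q, k + i, w, ?_, ?_, hw⟩
        · have h1 : 0 < q.length := List.length_pos_iff.2 hq
          rw [List.length_append]; omega
        · rw [MHIRF.iter_add, MHIRF.iter_eq_substRaw σ k,
            MHIRF.labelAt_substRaw_append _ _ p z hlab q]
          exact hlab'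
    have hmem : ∀ n : ℕ, ∃ p ∈ {p | ((σ.rt (HTerm.var x)) p).isSome},
        n ≤ p.length := by
      intro n
      obtain ⟨p, i, z, hlen, hlab, hz⟩ := key n
      obtain ⟨v, N, hN⟩ := MHIRF.eventually_stable σ hσ (HTerm.var x) p
      have hrt := MHIRF.rt_eq σ _ p v N hN
      have hsome : ((σ.iter (max i N) (HTerm.var x)).labelAt p).isSome :=
        MHIRF.labelAt_isSome_mono σ _ p (le_max_left _ _) (by rw [hlab]; rfl)
      rw [hN (max i N) (le_max_right _ _)] at hsome
      refine ⟨p, ?_, hlen⟩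
      simp only [Set.mem_setOf_eq]
      rw [hrt]
      exact hsome
    obtain ⟨B, hB⟩ := (hfin'.image List.length).bddAbove
    obtain ⟨p, hp, hlen⟩ := hmem (B + 1)
    have := hB (Set.mem_image_of_mem _ hp)
    omega
end

section
/- Let σ, τ ∈ RSubst with τ ∈ ↓σ. Then (a) hvars(τ) ⊆ hvars(σ), and (b) gvars(σ) ∩ hvars(σ) ⊆ gvars(τ) ∩ hvars(τ). -/
/-! ### Auxiliary infrastructure: the model of possibly-infinite trees. -/

section RTInfra

open scoped Classical

variable {Sg : Signature}

/-- Possibly infinite trees, as labeling functions. -/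
abbrev TreeT (Sg : Signature) := List ℕ → Option (Sg.Sym ⊕ ℕ)

/-- Evaluation of a finite term at a path, under a tree-valued valuation. -/
def evalAtT (w : ℕ → TreeT Sg) : HTerm Sg → List ℕ → Option (Sg.Sym ⊕ ℕ)
  | .var y, p => w y p
  | .app f _, [] => some (Sum.inl f)
  | .app f ts, i :: q => if h : i < Sg.arity f then evalAtT w (ts ⟨i, h⟩) q else none

/-- Interpretation of a function symbol on trees. -/
def interpT (f : Sg.Sym) (a : Fin (Sg.arity f) → TreeT Sg) : TreeT Sg
  | [] => some (Sum.inl f)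
  | i :: q => if h : i < Sg.arity f then a ⟨i, h⟩ q else none

/-- The structure of possibly-infinite trees. -/
def strucT (Sg : Signature) : Struc Sg := ⟨TreeT Sg, interpT⟩

lemma eval_eq_evalAtT (w : ℕ → TreeT Sg) (t : HTerm Sg) :
    HTerm.eval (strucT Sg) w t = evalAtT w t := by
  induction t with
  | var y => funext p; rfl
  | app f ts ih =>
    funext p
    cases p with
    | nil => rfl
    | cons i q =>
      show interpT f (fun i => HTerm.eval (strucT Sg) w (ts i)) (i :: q) =
        evalAtT w (HTerm.app f ts) (i :: q)
      simp only [interpT, evalAtT]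
      split
      · next h => exact congrFun (ih ⟨i, h⟩) q
      · rfl

lemma satT_iff (w : ℕ → TreeT Sg) (σ : Subst Sg) :
    (strucT Sg).Sat w σ.eqs ↔ ∀ x ∈ σ.dom, w x = evalAtT w (σ.map x) := by
  constructor
  · intro h x hx
    have := h (HTerm.var x, σ.map x) ⟨x, hx, rfl⟩
    simp [HTerm.eval, eval_eq_evalAtT] at this; exact this
  · rintro h e ⟨x, hx, rfl⟩
    simp [HTerm.eval, eval_eq_evalAtT]; exact h x hx

/-- Pointwise "defined-implies-equal" order on tree valuations. -/
def WLeT (w w' : ℕ → TreeT Sg) : Prop :=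
  ∀ z q a, w z q = some a → w' z q = some a

lemma evalAtT_mono {w w' : ℕ → TreeT Sg} (h : WLeT w w') :
    ∀ (t : HTerm Sg) (p : List ℕ) (a : Sg.Sym ⊕ ℕ),
      evalAtT w t p = some a → evalAtT w' t p = some a := by
  intro t
  induction t with
  | var z => exact fun p a hp => h z p a hp
  | app f ts ih =>
    intro p a hp
    cases p with
    | nil => exact hp
    | cons i q =>
      simp only [evalAtT] at hp ⊢
      split at hp
      · next hi => rw [dif_pos hi]; exact ih _ q a hp
      · exact absurd hp (by simp)

/-- The fueled approximations to the canonical solution of `σ` over `v`. -/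
noncomputable def solF (σ : Subst Sg) (v : ℕ → TreeT Sg) : ℕ → ℕ → TreeT Sg
  | 0 => fun _ _ => none
  | F + 1 => fun x p =>
      if x ∈ σ.dom then evalAtT (solF σ v F) (σ.map x) p else v x p

lemma solF_step (σ : Subst Sg) (v : ℕ → TreeT Sg) (F : ℕ) :
    WLeT (solF σ v F) (solF σ v (F + 1)) := by
  induction F with
  | zero => intro z q a h; simp [solF] at h
  | succ F ih =>
    intro z q a h
    simp only [solF] at h ⊢
    split at h
    · rw [if_pos ‹_›]; exact evalAtT_mono ih _ _ _ h
    · rwa [if_neg ‹_›]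

lemma solF_mono (σ : Subst Sg) (v : ℕ → TreeT Sg) {F G : ℕ} (hFG : F ≤ G) :
    WLeT (solF σ v F) (solF σ v G) := by
  induction G, hFG using Nat.le_induction with
  | base => exact fun z q a h => h
  | succ G _ ih => exact fun z q a h => solF_step σ v G z q a (ih z q a h)

/-- The canonical solution of `σ` over the valuation `v`. -/
noncomputable def solW (σ : Subst Sg) (v : ℕ → TreeT Sg) (x : ℕ)
    (p : List ℕ) : Option (Sg.Sym ⊕ ℕ) :=
  if h : ∃ a, ∃ F, solF σ v F x p = some a then some h.choose else none

lemma solW_some_iff {σ : Subst Sg} {v : ℕ → TreeT Sg} {x : ℕ} {p : List ℕ}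
    {a : Sg.Sym ⊕ ℕ} :
    solW σ v x p = some a ↔ ∃ F, solF σ v F x p = some a := by
  constructor
  · intro h
    unfold solW at h
    split at h
    · next hex =>
      obtain ⟨F, hF⟩ := hex.choose_spec
      exact ⟨F, by rwa [(Option.some.injEq _ _ ▸ h : hex.choose = a)] at hF⟩
    · exact absurd h (by simp)
  · rintro ⟨F, hF⟩
    have hex : ∃ a, ∃ F, solF σ v F x p = some a := ⟨a, F, hF⟩
    unfold solW
    rw [dif_pos hex]
    obtain ⟨G, hG⟩ := hex.choose_spec
    have h1 := solF_mono σ v (le_max_left F G) x p a hF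
    have h2 := solF_mono σ v (le_max_right F G) x p _ hG
    rw [h1] at h2
    exact (Option.some.injEq _ _ ▸ h2 : _) ▸ rfl

lemma option_eq_of_some_iff {α : Type _} {o₁ o₂ : Option α}
    (h : ∀ a, o₁ = some a ↔ o₂ = some a) : o₁ = o₂ := by
  cases o₁ with
  | none => cases o₂ with
    | none => rfl
    | some a => exact ((h a).mpr rfl)
  | some a => exact ((h a).mp rfl).symm

/-- Evaluation at a fixed path either ignores the valuation or probes it at
exactly one point. -/
lemma evalAtT_probe (t : HTerm Sg) (p : List ℕ) :
    (∀ w w' : ℕ → TreeT Sg, evalAtT w t p = evalAtT w' t p) ∨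
    (∃ z q, ∀ w : ℕ → TreeT Sg, evalAtT w t p = w z q) := by
  induction t generalizing p with
  | var z => exact Or.inr ⟨z, p, fun w => rfl⟩
  | app f ts ih =>
    cases p with
    | nil => exact Or.inl fun w w' => rfl
    | cons i q =>
      by_cases h : i < Sg.arity f
      · rcases ih ⟨i, h⟩ q with h1 | ⟨z, q', h2⟩
        · left; intro w w'
          simp only [evalAtT, dif_pos h]
          exact h1 w w'
        · right; exact ⟨z, q', fun w => by simp only [evalAtT, dif_pos h]; exact h2 w⟩
      · left; intro w w'; simp [evalAtT, h]

lemma solW_not_dom {σ : Subst Sg} {v : ℕ → TreeT Sg} {x : ℕ}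
    (hx : x ∉ σ.dom) : solW σ v x = v x := by
  funext p
  have hstep : ∀ F, solF σ v (F + 1) x p = v x p := fun F => by
    simp [solF, hx]
  apply option_eq_of_some_iff
  intro a
  rw [solW_some_iff]
  constructor
  · rintro ⟨F, hF⟩
    cases F with
    | zero => simp [solF] at hF
    | succ F => rwa [hstep F] at hF
  · intro h; exact ⟨1, by rw [hstep 0]; exact h⟩

lemma solW_dom {σ : Subst Sg} {v : ℕ → TreeT Sg} {x : ℕ}
    (hx : x ∈ σ.dom) : solW σ v x = evalAtT (solW σ v) (σ.map x) := by
  funext p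
  have hstep : ∀ F, solF σ v (F + 1) x p = evalAtT (solF σ v F) (σ.map x) p :=
    fun F => by simp [solF, hx]
  rcases evalAtT_probe (σ.map x) p with h1 | ⟨z, q, h2⟩
  · -- value independent of the valuation
    apply option_eq_of_some_iff
    intro a
    rw [solW_some_iff]
    constructor
    · rintro ⟨F, hF⟩
      cases F with
      | zero => simp [solF] at hF
      | succ F => rw [hstep F] at hF; rw [h1 (solW σ v) (solF σ v F)]; exact hF
    · intro h
      refine ⟨1, ?_⟩
      rw [hstep 0, h1 (solF σ v 0) (solW σ v)]
      exact h
  · rw [h2 (solW σ v)]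
    apply option_eq_of_some_iff
    intro a
    rw [solW_some_iff, solW_some_iff]
    constructor
    · rintro ⟨F, hF⟩
      cases F with
      | zero => simp [solF] at hF
      | succ F => rw [hstep F, h2 (solF σ v F)] at hF; exact ⟨F, hF⟩
    · rintro ⟨F, hF⟩
      exact ⟨F + 1, by rw [hstep F, h2 (solF σ v F)]; exact hF⟩

/-- One variable is bound to another variable. -/
def VarStepT (σ : Subst Sg) (x y : ℕ) : Prop :=
  x ∈ σ.dom ∧ σ.map x = HTerm.var y

lemma no_varStep_chain {σ : Subst Sg} (hσ : σ.InRSF) :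
    ¬ ∃ f : ℕ → ℕ, ∀ n, VarStepT σ (f n) (f (n + 1)) := by
  rintro ⟨f, hf⟩
  -- pigeonhole: some value repeats
  have hdomf : ∀ n, f n ∈ σ.finite.toFinset := fun n => by
    rw [Set.Finite.mem_toFinset]; exact (hf n).1
  obtain ⟨i, j, hij, hfij⟩ :=
    Finite.exists_ne_map_eq_of_infinite (fun n : ℕ => (⟨f n, hdomf n⟩ : σ.finite.toFinset))
  have hfij' : f i = f j := congrArg Subtype.val hfij
  -- minimal gap with a repetition
  have hP : ∃ d, ∃ i, f i = f (i + d + 1) := by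
    rcases Nat.lt_or_ge i j with h | h
    · exact ⟨j - i - 1, i, by rw [hfij']; congr 1; omega⟩
    · have h' : j < i := lt_of_le_of_ne h (Ne.symm hij)
      exact ⟨i - j - 1, j, by rw [← hfij']; congr 1; omega⟩
  classical
  set d₀ := Nat.find hP with hd₀
  obtain ⟨i₀, hi₀⟩ := Nat.find_spec hP
  set n := d₀ + 1 with hn
  set x : ℕ → ℕ := fun k => f (i₀ + k) with hx
  -- injectivity on [0, n)
  have hinj : ∀ k l, k < n → l < n → x k = x l → k = l := by
    intro k l hk hl hkl
    by_contra hne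
    have : ∃ a b, a < b ∧ b < n ∧ x a = x b := by
      rcases Nat.lt_or_ge k l with h | h
      · exact ⟨k, l, h, hl, hkl⟩
      · exact ⟨l, k, lt_of_le_of_ne h (Ne.symm hne), hk, hkl.symm⟩
    obtain ⟨a, b, hab, hbn, hxab⟩ := this
    have : b - a - 1 < d₀ := by omega
    exact Nat.find_min hP this ⟨i₀ + a, by
      have : i₀ + a + (b - a - 1) + 1 = i₀ + b := by omega
      rw [this]; exact hxab⟩
  -- the cyclic steps
  have hcyc : ∀ k, k < n → VarStepT σ (x k) (x ((k + 1) % n)) := by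
    intro k hk
    rcases Nat.lt_or_ge (k + 1) n with h | h
    · rw [Nat.mod_eq_of_lt h]
      exact hf (i₀ + k) |>.imp id (by rw [show i₀ + k + 1 = i₀ + (k + 1) by omega]; exact id)
    · have hkn : k + 1 = n := by omega
      have : (k + 1) % n = 0 := by rw [hkn]; exact Nat.mod_self n
      rw [this]
      have h1 := hf (i₀ + k)
      have : x 0 = f (i₀ + k + 1) := by
        show f (i₀ + 0) = _
        rw [Nat.add_zero]
        rw [hi₀]; congr 1; omega
      rw [this]
      exact h1
  -- n = 1 : self-loop, impossible
  rcases Nat.lt_or_ge 1 n with hn1 | hn1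
  · -- circular binding set
    set S : Set (ℕ × HTerm Sg) :=
      {p | ∃ i < n, p = (x i, HTerm.var (x ((i + 1) % n)))} with hS
    have hsub : S ⊆ σ.bindings := by
      rintro p ⟨k, hk, rfl⟩
      exact ⟨(hcyc k hk).1, ((hcyc k hk).2).symm⟩
    exact hσ S hsub ⟨n, hn1, x, hinj, rfl⟩
  · have hn1' : n = 1 := by omega
    have := hcyc 0 (by omega)
    rw [hn1'] at this
    simp only [Nat.mod_self] at this
    obtain ⟨hd, hm⟩ := this
    exact hd hm

lemma varStepT_wf {σ : Subst Sg} (hσ : σ.InRSF) :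
    WellFounded (fun y x => VarStepT σ x y) := by
  set r : ℕ → ℕ → Prop := fun y x => VarStepT σ x y with hr
  constructor
  intro a
  by_contra ha
  have step : ∀ b : {b : ℕ // ¬ Acc r b}, ∃ c : {b : ℕ // ¬ Acc r b}, r c.val b.val := by
    intro b
    obtain ⟨c, hc1, hc2⟩ := exists_not_acc_lt_of_not_acc b.2
    exact ⟨⟨c, hc1⟩, hc2⟩
  choose nxt hnxt using step
  let g : ℕ → {b : ℕ // ¬ Acc r b} := fun n => nxt^[n] ⟨a, ha⟩
  refine no_varStep_chain hσ ⟨fun n => (g n).val, fun n => ?_⟩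
  have hsucc : g (n + 1) = nxt (g n) := Function.iterate_succ_apply' nxt n _
  have h := hnxt (g n)
  rw [← hsucc] at h
  exact h

lemma evalAtT_agree_le {w₁ w₂ : ℕ → TreeT Sg} {n : ℕ}
    (h : ∀ z (q : List ℕ), q.length ≤ n → w₁ z q = w₂ z q) :
    ∀ (t : HTerm Sg) (q : List ℕ), q.length ≤ n → evalAtT w₁ t q = evalAtT w₂ t q := by
  intro t
  induction t with
  | var z => exact fun q hq => h z q hq
  | app f ts ih =>
    intro q hq
    cases q with
    | nil => rfl
    | cons j q2 =>
      simp only [evalAtT]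
      split
      · exact ih _ q2 (by simpa using Nat.le_of_succ_le hq)
      · rfl

lemma sol_unique {σ : Subst Sg} (hσ : σ.InRSF) (w₁ w₂ : ℕ → TreeT Sg)
    (hv : ∀ x ∉ σ.dom, w₁ x = w₂ x)
    (h1 : ∀ x ∈ σ.dom, w₁ x = evalAtT w₁ (σ.map x))
    (h2 : ∀ x ∈ σ.dom, w₂ x = evalAtT w₂ (σ.map x)) : w₁ = w₂ := by
  have main : ∀ (n : ℕ) (p : List ℕ), p.length = n → ∀ x, w₁ x p = w₂ x p := by
    intro n
    induction n using Nat.strong_induction_on with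
    | _ n IH =>
      intro p hp x
      induction x using WellFounded.induction (varStepT_wf hσ) with
      | _ x IH2 =>
        by_cases hx : x ∈ σ.dom
        · rw [congrFun (h1 x hx) p, congrFun (h2 x hx) p]
          cases hmap : σ.map x with
          | var y =>
            have hst : VarStepT σ x y := ⟨hx, hmap⟩
            exact IH2 y hst
          | app f ts =>
            cases p with
            | nil => rfl
            | cons i q =>
              simp only [evalAtT]
              split
              · refine evalAtT_agree_le ?_ _ q (le_refl _)
                intro z q' hq'
                exact IH q'.length (by rw [← hp]; simp; omega) q' rfl z
              · rfl
        · rw [congrFun (hv x hx) p]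
  funext x p
  exact main p.length p rfl x

/-- The model of possibly-infinite trees. -/
noncomputable def treeModel (Sg : Signature) : RTModel Sg where
  struc := strucT Sg
  inj := by
    intro f a b h
    funext i q
    have := congrFun h (i.val :: q)
    simpa [strucT, interpT, i.isLt, Fin.eta] using this
  distinct := by
    intro f g a b hfg h
    have := congrFun h []
    simp [strucT, interpT] at this
    exact hfg this
  uniqueness := by
    intro σ hσ v
    refine ⟨solW σ v, ⟨fun x hx => solW_not_dom hx, (satT_iff _ _).mpr
      (fun x hx => solW_dom hx)⟩, ?_⟩
    rintro w ⟨hoff, hsat⟩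
    exact sol_unique hσ w (solW σ v)
      (fun x hx => by rw [hoff x hx]; exact (solW_not_dom hx).symm)
      ((satT_iff _ _).mp hsat)
      (fun x hx => solW_dom hx)

/-- A tree has nodes only up to a bounded depth (i.e. it is a finite tree,
since branching at each node is bounded by the arity). -/
def FinDepth (u : TreeT Sg) : Prop := ∃ N, ∀ p : List ℕ, N ≤ p.length → u p = none

lemma varsIn_finite (t : HTerm Sg) : t.varsIn.Finite := by
  induction t with
  | var x => simp only [HTerm.varsIn]; exact Set.finite_singleton x
  | app f ts ih => exact Set.finite_iUnion ih

lemma finDepth_evalAtT {w : ℕ → TreeT Sg} (t : HTerm Sg)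
    (h : ∀ z ∈ t.varsIn, FinDepth (w z)) : FinDepth (evalAtT w t) := by
  induction t with
  | var z =>
    obtain ⟨N, hN⟩ := h z (by simp [HTerm.varsIn])
    exact ⟨N, fun p hp => hN p hp⟩
  | app f ts ih =>
    choose N hN using fun i => ih i (fun z hz => h z (Set.mem_iUnion.mpr ⟨i, hz⟩))
    refine ⟨(Finset.univ.sup N) + 1, ?_⟩
    intro p hp
    cases p with
    | nil => simp at hp
    | cons i q =>
      simp only [evalAtT]
      split
      · next hi =>
        refine hN ⟨i, hi⟩ q ?_
        have h1 : N ⟨i, hi⟩ ≤ Finset.univ.sup N := Finset.le_sup (Finset.mem_univ _)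
        have h2 : Finset.univ.sup N ≤ q.length := by
          simp only [List.length_cons] at hp; omega
        omega
      · rfl

/-- The subtree of a tree at a path. -/
def subAtT (u : TreeT Sg) (P : List ℕ) : TreeT Sg := fun q => u (P ++ q)

lemma subAtT_nil (u : TreeT Sg) : subAtT u [] = u := by
  funext q; rfl

lemma subAtT_append (u : TreeT Sg) (P Q : List ℕ) :
    subAtT (subAtT u P) Q = subAtT u (P ++ Q) := by
  funext q; simp [subAtT, List.append_assoc]

/-- An occurrence of a variable in a term yields a uniform subtree position. -/
lemma subtree_occurrence {t : HTerm Sg} {z : ℕ} (hz : z ∈ t.varsIn) :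
    ∃ P : List ℕ, (∀ w : ℕ → TreeT Sg, subAtT (evalAtT w t) P = w z) ∧
      ((∀ y, t ≠ HTerm.var y) → P ≠ []) := by
  induction t with
  | var y =>
    have hzy : z = y := by simpa [HTerm.varsIn] using hz
    subst hzy
    exact ⟨[], fun w => by rw [subAtT_nil]; rfl, fun h => (h z rfl).elim⟩
  | app f ts ih =>
    obtain ⟨i, hi⟩ := Set.mem_iUnion.mp hz
    obtain ⟨P, hP, _⟩ := ih i hi
    refine ⟨i.val :: P, ?_, by simp⟩
    intro w
    funext q
    show evalAtT w (HTerm.app f ts) ((i.val :: P) ++ q) = w z q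
    rw [List.cons_append]
    simp only [evalAtT, dif_pos i.isLt, Fin.eta]
    have := congrFun (hP w) q
    simpa [subAtT] using this

lemma hvarsN_succ (σ : Subst Sg) (n : ℕ) :
    σ.hvarsN (n + 1) = σ.hvarsN n ∪ {y | y ∈ σ.dom ∧ (σ.map y).varsIn ⊆ σ.hvarsN n} :=
  rfl

lemma hvarsN_mono (σ : Subst Sg) {m n : ℕ} (h : m ≤ n) :
    σ.hvarsN m ⊆ σ.hvarsN n := by
  induction n, h using Nat.le_induction with
  | base => exact subset_rfl
  | succ n _ ih => exact ih.trans (by rw [hvarsN_succ]; exact Set.subset_union_left)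

lemma finite_subset_hvars {σ : Subst Sg} {S : Set ℕ} (hS : S.Finite)
    (h : S ⊆ σ.hvars) : ∃ m, S ⊆ σ.hvarsN m := by
  refine Set.Finite.induction_on
    (motive := fun s _ => s ⊆ σ.hvars → ∃ m, s ⊆ σ.hvarsN m) S hS
    (fun _ => ⟨0, by simp⟩) ?_ h
  intro a s _ _ ih hsub
  obtain ⟨m, hm⟩ := ih (fun x hx => hsub (Set.mem_insert_of_mem a hx))
  have hah : a ∈ σ.hvars := hsub (Set.mem_insert a s)
  obtain ⟨T, ⟨k, rfl⟩, hk⟩ := hah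
  refine ⟨max k m, ?_⟩
  intro x hx
  rcases hx with rfl | hx
  · exact hvarsN_mono σ (le_max_left k m) hk
  · exact hvarsN_mono σ (le_max_right k m) (hm hx)

lemma not_hvars_step {σ : Subst Sg} {y : ℕ} (hy : y ∉ σ.hvars) :
    y ∈ σ.dom ∧ ∃ z ∈ (σ.map y).varsIn, z ∉ σ.hvars := by
  have hdom : y ∈ σ.dom := by
    by_contra hd
    exact hy ⟨σ.hvarsN 0, ⟨0, rfl⟩, hd⟩
  refine ⟨hdom, ?_⟩
  by_contra hall
  push_neg at hall
  obtain ⟨m, hm⟩ := finite_subset_hvars (varsIn_finite (σ.map y)) hall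
  exact hy ⟨σ.hvarsN (m + 1), ⟨m + 1, rfl⟩, Or.inr ⟨hdom, hm⟩⟩

/-- If `x ∉ hvars σ` then, in any solution of `σ`, the tree bound to `x` has
nodes at unbounded depth. -/
lemma not_hvars_infinite {σ : Subst Sg} (hσ : σ.InRSF) {w : ℕ → TreeT Sg}
    (hw : ∀ x ∈ σ.dom, w x = evalAtT w (σ.map x))
    {x : ℕ} (hx : x ∉ σ.hvars) : ¬ FinDepth (w x) := by
  -- choose an infinite descent through non-hvars variables
  have step : ∀ y : {y : ℕ // y ∉ σ.hvars}, ∃ z : {y : ℕ // y ∉ σ.hvars},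
      (y : ℕ) ∈ σ.dom ∧ (z : ℕ) ∈ (σ.map y).varsIn := by
    intro y
    obtain ⟨hd, z, hz1, hz2⟩ := not_hvars_step y.2
    exact ⟨⟨z, hz2⟩, hd, hz1⟩
  choose nxt hdom hmem using step
  let g : ℕ → {y : ℕ // y ∉ σ.hvars} := fun n => nxt^[n] ⟨x, hx⟩
  have hg0 : (g 0 : ℕ) = x := rfl
  have hgs : ∀ n, g (n + 1) = nxt (g n) := fun n => Function.iterate_succ_apply' nxt n _
  -- subtree positions along the descent
  have hsub : ∀ n, ∃ P : List ℕ, subAtT (w (g n)) P = w (g (n + 1)) ∧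
      ((∀ y, σ.map (g n) ≠ HTerm.var y) → P ≠ []) := by
    intro n
    obtain ⟨P, h1, h2⟩ := subtree_occurrence (hgs n ▸ hmem (g n))
    refine ⟨P, ?_, h2⟩
    rw [hw _ (hdom (g n))]
    exact h1 w
  choose P hP hPne using hsub
  -- cumulative paths
  let Q : ℕ → List ℕ := fun n => Nat.rec [] (fun n Qn => Qn ++ P n) n
  have hQ0 : Q 0 = [] := rfl
  have hQs : ∀ n, Q (n + 1) = Q n ++ P n := fun n => rfl
  have hQsub : ∀ n, subAtT (w x) (Q n) = w (g n) := by
    intro n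
    induction n with
    | zero => rw [hQ0, subAtT_nil, hg0]
    | succ n ih => rw [hQs, ← subAtT_append, ih, hP n]
  -- infinitely many indices with a non-variable binding
  have happ : ∀ k, ∃ n, k ≤ n ∧ ∀ y, σ.map (g n) ≠ HTerm.var y := by
    intro k
    by_contra hcon
    push_neg at hcon
    refine no_varStep_chain hσ ⟨fun m => (g (k + m) : ℕ), fun m => ?_⟩
    obtain ⟨y, hy⟩ := hcon (k + m) (Nat.le_add_right k m)
    refine ⟨hdom (g (k + m)), ?_⟩
    have hmem' := hgs (k + m) ▸ hmem (g (k + m))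
    rw [hy, HTerm.varsIn] at hmem'
    have : (g (k + m + 1) : ℕ) = y := hmem'
    show σ.map ((g (k + m) : ℕ)) = HTerm.var ((g (k + (m + 1)) : ℕ))
    rw [show k + (m + 1) = k + m + 1 by omega, this, hy]
  -- at such indices the root of the subtree is defined
  have hroot : ∀ n, (∀ y, σ.map (g n) ≠ HTerm.var y) → ∃ a, w x (Q n) = some a := by
    intro n hn
    have h0 : w x (Q n ++ []) = w (g n) [] := congrFun (hQsub n) []
    rw [List.append_nil] at h0
    rw [h0, hw _ (hdom (g n))]
    cases hm : σ.map (g n) with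
    | var y => exact absurd hm (hn y)
    | app f ts => exact ⟨Sum.inl f, rfl⟩
  -- lengths grow without bound
  have hQmono : ∀ m n, m ≤ n → (Q m).length ≤ (Q n).length := by
    intro m n h
    induction n, h using Nat.le_induction with
    | base => exact le_refl _
    | succ n _ ih => rw [hQs]; simp only [List.length_append]; omega
  have hQunb : ∀ B, ∃ n, B ≤ (Q n).length := by
    intro B
    induction B with
    | zero => exact ⟨0, Nat.zero_le _⟩
    | succ B ih =>
      obtain ⟨n, hn⟩ := ih
      obtain ⟨n', hn', happ'⟩ := happ n
      have hne : P n' ≠ [] := hPne n' happ'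
      have : (Q (n' + 1)).length = (Q n').length + (P n').length := by
        rw [hQs]; simp
      have hplen : 1 ≤ (P n').length := by
        cases hp : P n' with
        | nil => exact absurd hp hne
        | cons a l => simp
      exact ⟨n' + 1, by have := hQmono n n' hn'; omega⟩
  -- contradiction with finite depth
  rintro ⟨N, hN⟩
  obtain ⟨n, hn⟩ := hQunb N
  obtain ⟨n', hn', happ'⟩ := happ n
  obtain ⟨a, ha⟩ := hroot n' happ'
  have hlen : N ≤ (Q n').length := le_trans hn (hQmono n n' hn')
  rw [hN (Q n') hlen] at ha
  exact absurd ha (by simp)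

/-- If `x ∈ hvars σ` then, in any solution of `σ` whose parameters are
depth-bounded, the tree bound to `x` is depth-bounded. -/
lemma hvars_finDepth {σ : Subst Sg} {w : ℕ → TreeT Sg}
    (hw : ∀ x ∈ σ.dom, w x = evalAtT w (σ.map x))
    (hfree : ∀ y ∉ σ.dom, FinDepth (w y)) :
    ∀ n, ∀ x ∈ σ.hvarsN n, FinDepth (w x) := by
  intro n
  induction n with
  | zero => exact fun x hx => hfree x hx
  | succ n ih =>
    intro x hx
    rcases hx with hx | ⟨hd, hv⟩
    · exact ih x hx
    · rw [hw x hd]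
      exact finDepth_evalAtT _ (fun z hz => ih z (hv hz))

lemma hvars_finDepth' {σ : Subst Sg} {w : ℕ → TreeT Sg}
    (hw : ∀ x ∈ σ.dom, w x = evalAtT w (σ.map x))
    (hfree : ∀ y ∉ σ.dom, FinDepth (w y))
    {x : ℕ} (hx : x ∈ σ.hvars) : FinDepth (w x) := by
  obtain ⟨T, ⟨n, rfl⟩, hn⟩ := hx
  exact hvars_finDepth hw hfree n x hn

lemma map_eq_var_of_not_dom {σ : Subst Sg} {y : ℕ} (hy : y ∉ σ.dom) :
    σ.map y = HTerm.var y := not_not.mp hy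

lemma occN_zero (σ : Subst Sg) (v : ℕ) : σ.occN 0 v = {v} \ σ.dom := rfl

lemma occN_succ (σ : Subst Sg) (n : ℕ) (v : ℕ) :
    σ.occN (n + 1) v = {y | ((σ.map y).varsIn ∩ σ.occN n v).Nonempty} := rfl

lemma occN_mono (σ : Subst Sg) (v : ℕ) : ∀ n, σ.occN n v ⊆ σ.occN (n + 1) v := by
  intro n
  induction n with
  | zero =>
    intro y hy
    obtain ⟨hyv, hyd⟩ := hy
    refine ⟨y, ?_, ⟨hyv, hyd⟩⟩
    rw [map_eq_var_of_not_dom hyd, HTerm.varsIn]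
    rfl
  | succ n ih =>
    rintro y ⟨z, hz1, hz2⟩
    exact ⟨z, hz1, ih hz2⟩

lemma occN_le_mono (σ : Subst Sg) (v : ℕ) {m n : ℕ} (h : m ≤ n) :
    σ.occN m v ⊆ σ.occN n v := by
  induction n, h using Nat.le_induction with
  | base => exact subset_rfl
  | succ n _ ih => exact ih.trans (occN_mono σ v n)

lemma occN_not_dom_mem {σ : Subst Sg} {v y : ℕ} {n : ℕ} (hyd : y ∉ σ.dom)
    (hy : y ∈ σ.occN (n + 1) v) : y ∈ σ.occN n v := by
  obtain ⟨z, hz1, hz2⟩ := hy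
  rw [map_eq_var_of_not_dom hyd, HTerm.varsIn] at hz1
  cases hz1
  exact hz2

lemma occN_subset (σ : Subst Sg) (v : ℕ) : ∀ n, σ.occN n v ⊆ σ.dom ∪ {v} := by
  intro n
  induction n with
  | zero => exact fun y hy => Or.inr hy.1
  | succ n ih =>
    intro y hy
    by_cases hyd : y ∈ σ.dom
    · exact Or.inl hyd
    · exact ih (occN_not_dom_mem hyd hy)

lemma occN_finite (σ : Subst Sg) (v : ℕ) (n : ℕ) : (σ.occN n v).Finite :=
  Set.Finite.subset (σ.finite.union (Set.finite_singleton v)) (occN_subset σ v n)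

lemma ncard_dom (σ : Subst Sg) : σ.dom.ncard = σ.numBindings := by
  rw [Subst.numBindings, ← Set.ncard_coe_finset, Set.Finite.coe_toFinset]
  rfl

lemma occN_stable_forever {σ : Subst Sg} {v n : ℕ}
    (h : σ.occN n v = σ.occN (n + 1) v) :
    ∀ k, σ.occN (n + k) v = σ.occN n v := by
  intro k
  induction k with
  | zero => rfl
  | succ k ih =>
    have : σ.occN (n + k + 1) v = σ.occN (n + 1) v := by
      rw [occN_succ, occN_succ, ih]
    rw [show n + (k + 1) = n + k + 1 by omega, this, ← h]

lemma exists_occN_stable (σ : Subst Sg) (v : ℕ) :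
    ∃ n ≤ σ.numBindings, σ.occN n v = σ.occN (n + 1) v := by
  by_cases hv : v ∈ σ.dom
  · refine ⟨0, Nat.zero_le _, ?_⟩
    have h0 : σ.occN 0 v = ∅ := by
      rw [occN_zero]
      ext y
      simp only [Set.mem_diff, Set.mem_singleton_iff, Set.mem_empty_iff_false, iff_false]
      rintro ⟨rfl, hd⟩
      exact hd hv
    rw [h0, occN_succ, h0]
    ext y
    simp
  · by_contra hcon
    push_neg at hcon
    have hgrow : ∀ n, n ≤ σ.numBindings + 1 → n + 1 ≤ (σ.occN n v).ncard := by
      intro n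
      induction n with
      | zero =>
        intro _
        have : σ.occN 0 v = {v} := by
          rw [occN_zero]
          ext y
          simp only [Set.mem_diff, Set.mem_singleton_iff]
          exact ⟨fun h => h.1, fun h => ⟨h, h ▸ hv⟩⟩
        rw [this, Set.ncard_singleton]
      | succ n ih =>
        intro hn
        have hne := hcon n (by omega)
        have hssub : σ.occN n v ⊂ σ.occN (n + 1) v :=
          HasSubset.Subset.ssubset_of_ne (occN_mono σ v n) hne
        have := Set.ncard_lt_ncard hssub (occN_finite σ v (n + 1))
        have := ih (by omega)
        omega
    have h1 := hgrow (σ.numBindings + 1) le_rfl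
    have h2 : (σ.occN (σ.numBindings + 1) v).ncard ≤ σ.numBindings + 1 := by
      refine le_trans (Set.ncard_le_ncard (occN_subset σ v _)
        (σ.finite.union (Set.finite_singleton v))) ?_
      refine le_trans (Set.ncard_union_le _ _) ?_
      rw [ncard_dom, Set.ncard_singleton]
    omega

lemma occN_stationary (σ : Subst Sg) (v : ℕ) {m : ℕ} (hm : σ.numBindings ≤ m) :
    σ.occN m v = σ.occ v := by
  obtain ⟨n, hn, hstab⟩ := exists_occN_stable σ v
  have h1 : σ.occN m v = σ.occN n v := by
    have := occN_stable_forever hstab (m - n)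
    rwa [show n + (m - n) = m by omega] at this
  have h2 : σ.occ v = σ.occN n v := by
    show σ.occN σ.numBindings v = _
    have := occN_stable_forever hstab (σ.numBindings - n)
    rwa [show n + (σ.numBindings - n) = σ.numBindings by omega] at this
  rw [h1, h2]

lemma occ_empty_of_dom {σ : Subst Sg} {v : ℕ} (hv : v ∈ σ.dom) : σ.occ v = ∅ := by
  have : ∀ n, σ.occN n v = ∅ := by
    intro n
    induction n with
    | zero =>
      ext y
      simp only [occN_zero, Set.mem_diff, Set.mem_singleton_iff,
        Set.mem_empty_iff_false, iff_false]
      rintro ⟨rfl, hd⟩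
      exact hd hv
    | succ n ih =>
      ext y
      simp [occN_succ, ih]
  exact this _

lemma numBindings_pos {σ : Subst Sg} {y : ℕ} (h : y ∈ σ.dom) :
    1 ≤ σ.numBindings :=
  Finset.card_pos.mpr ⟨y, by rwa [Set.Finite.mem_toFinset]⟩

lemma hvars_dom_vars {σ : Subst Sg} {y : ℕ} (hy : y ∈ σ.hvars)
    (hd : y ∈ σ.dom) : ∃ n, (σ.map y).varsIn ⊆ σ.hvarsN n := by
  obtain ⟨T, ⟨m, rfl⟩, hm⟩ := hy
  induction m with
  | zero => exact absurd hd hm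
  | succ m ih =>
    rcases hm with hm | ⟨_, hv⟩
    · exact ih hm
    · exact ⟨m, hv⟩

/-- `gvars σ ∩ hvars σ` is closed under taking variables of bindings. -/
lemma gh_closed {σ : Subst Sg} {y : ℕ} (hg : y ∈ σ.gvars) (hh : y ∈ σ.hvars) :
    ∀ z ∈ (σ.map y).varsIn, z ∈ σ.gvars ∧ z ∈ σ.hvars := by
  intro z hz
  obtain ⟨hyd, hyocc⟩ := hg
  have hzd : z ∈ σ.dom := by
    by_contra hzd
    have hzvo : z ∈ σ.varsOf := Or.inr (Set.mem_biUnion hyd hz)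
    refine hyocc z hzvo ?_
    have h1 : y ∈ σ.occN 1 z := ⟨z, hz, by exact ⟨rfl, hzd⟩⟩
    exact occN_le_mono σ z (numBindings_pos hyd) h1
  have hzocc : ∀ v ∈ σ.varsOf, z ∉ σ.occ v := by
    intro v hv hzo
    refine hyocc v hv ?_
    rw [← occN_stationary σ v (le_refl σ.numBindings)] at hzo
    have : y ∈ σ.occN (σ.numBindings + 1) v := ⟨z, hz, hzo⟩
    rwa [occN_stationary σ v (Nat.le_succ _)] at this
  obtain ⟨n, hn⟩ := hvars_dom_vars hh hyd
  exact ⟨⟨hzd, hzocc⟩, ⟨σ.hvarsN n, ⟨n, rfl⟩, hn hz⟩⟩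

lemma evalAtT_congr {w₁ w₂ : ℕ → TreeT Sg} (t : HTerm Sg)
    (h : ∀ z ∈ t.varsIn, w₁ z = w₂ z) : evalAtT w₁ t = evalAtT w₂ t := by
  induction t with
  | var z =>
    funext p
    exact congrFun (h z (by simp [HTerm.varsIn])) p
  | app f ts ih =>
    funext p
    cases p with
    | nil => rfl
    | cons i q =>
      simp only [evalAtT]
      split
      · next hi =>
        exact congrFun (ih ⟨i, hi⟩ (fun z hz => h z (Set.mem_iUnion.mpr ⟨_, hz⟩))) q
      · rfl

/-- Variables in `gvars σ ∩ hvars σ` are bound to depth-bounded trees in any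
solution of `σ`. -/
lemma gh_finDepth {σ : Subst Sg} {w : ℕ → TreeT Sg}
    (hw : ∀ x ∈ σ.dom, w x = evalAtT w (σ.map x)) :
    ∀ n, ∀ y, y ∈ σ.hvarsN n → y ∈ σ.gvars → FinDepth (w y) := by
  intro n
  induction n with
  | zero => exact fun y hy hg => absurd hg.1 hy
  | succ n ih =>
    intro y hy hg
    rcases hy with hy | ⟨hd, hv⟩
    · exact ih y hy hg
    · rw [hw y hd]
      apply finDepth_evalAtT
      intro z hz
      have hh : y ∈ σ.hvars := ⟨σ.hvarsN (n + 1), ⟨n + 1, rfl⟩, Or.inr ⟨hd, hv⟩⟩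
      exact ih z (hv hz) (gh_closed hg hh z hz).1

/-- Variables in `gvars σ ∩ hvars σ` take the same value in any two
solutions of `σ`. -/
lemma gh_unique {σ : Subst Sg} {w₁ w₂ : ℕ → TreeT Sg}
    (hw₁ : ∀ x ∈ σ.dom, w₁ x = evalAtT w₁ (σ.map x))
    (hw₂ : ∀ x ∈ σ.dom, w₂ x = evalAtT w₂ (σ.map x)) :
    ∀ n, ∀ y, y ∈ σ.hvarsN n → y ∈ σ.gvars → w₁ y = w₂ y := by
  intro n
  induction n with
  | zero => exact fun y hy hg => absurd hg.1 hy
  | succ n ih =>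
    intro y hy hg
    rcases hy with hy | ⟨hd, hv⟩
    · exact ih y hy hg
    · rw [hw₁ y hd, hw₂ y hd]
      apply evalAtT_congr
      intro z hz
      have hh : y ∈ σ.hvars := ⟨σ.hvarsN (n + 1), ⟨n + 1, rfl⟩, Or.inr ⟨hd, hv⟩⟩
      exact ih z (hv hz) (gh_closed hg hh z hz).1

/-- If `y ∈ occ_n(σ, v)` then, in any solution, the tree at `v` is a subtree
of the tree at `y`, at a uniform position. -/
lemma occ_subtree {σ : Subst Sg} {v : ℕ} :
    ∀ n, ∀ y ∈ σ.occN n v, ∃ P : List ℕ, ∀ w : ℕ → TreeT Sg,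
      (∀ x ∈ σ.dom, w x = evalAtT w (σ.map x)) → subAtT (w y) P = w v := by
  intro n
  induction n with
  | zero =>
    rintro y ⟨hyv, _⟩
    cases hyv
    exact ⟨[], fun w _ => subAtT_nil _⟩
  | succ n ih =>
    rintro y ⟨z, hz1, hz2⟩
    obtain ⟨P', hP'⟩ := ih z hz2
    by_cases hyd : y ∈ σ.dom
    · obtain ⟨P₀, hP₀, _⟩ := subtree_occurrence hz1
      refine ⟨P₀ ++ P', fun w hw => ?_⟩
      rw [← subAtT_append, hw y hyd, hP₀ w, hP' w hw]
    · rw [map_eq_var_of_not_dom hyd, HTerm.varsIn] at hz1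
      cases hz1
      exact ih y hz2

end RTInfra

/-- If `σ, τ ∈ RSubst` and `τ ∈ ↓σ`, then
(a) `hvars(τ) ⊆ hvars(σ)` and
(b) `gvars(σ) ∩ hvars(σ) ⊆ gvars(τ) ∩ hvars(τ)`. -/
theorem down_gvars_hvars
    (Sg : Signature) (hconst : ∃ f, Sg.arity f = 0) (hposar : ∃ f, 0 < Sg.arity f)
    (σ τ : Subst Sg) (hσ : σ.InRSF) (hτ : τ.InRSF) (hdown : τ ∈ downRT σ) :
    τ.hvars ⊆ σ.hvars ∧ σ.gvars ∩ σ.hvars ⊆ τ.gvars ∩ τ.hvars := by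
  obtain ⟨σ', hσ', _, hEquiv, _⟩ := hdown
  -- every solution of τ in the tree model is a solution of σ
  have key : ∀ w : ℕ → TreeT Sg, (∀ x ∈ τ.dom, w x = evalAtT w (τ.map x)) →
      (∀ x ∈ σ.dom, w x = evalAtT w (σ.map x)) := by
    intro w hwτ
    have h1 : (strucT Sg).Sat w τ.eqs := (satT_iff w τ).mpr hwτ
    have h2 := (hEquiv (treeModel Sg) w).mp h1
    have h3 : (strucT Sg).Sat w σ.eqs := fun e he => h2 e (Set.mem_union_left _ he)
    exact (satT_iff w σ).mp h3
  -- two distinct depth-bounded trees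
  obtain ⟨c0, hc0⟩ := hconst
  obtain ⟨f1, hf1⟩ := hposar
  set C : TreeT Sg := fun p => if p = [] then some (Sum.inl c0) else none with hC
  set D : TreeT Sg := fun p => if p = [] then some (Sum.inl f1) else none with hD
  have hCfin : FinDepth C := by
    refine ⟨1, fun p hp => ?_⟩
    cases p with
    | nil => simp at hp
    | cons a l => simp [hC]
  have hCD : C ≠ D := by
    intro h
    have h0 := congrFun h []
    simp only [hC, hD, if_pos rfl, Option.some.injEq, Sum.inl.injEq] at h0
    rw [h0] at hc0
    omega
  -- the canonical solution of τ over the constant valuation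
  have hfixτ0 : ∀ z ∈ τ.dom,
      solW τ (fun _ => C) z = evalAtT (solW τ (fun _ => C)) (τ.map z) :=
    fun z hz => solW_dom hz
  have hfixσ0 := key _ hfixτ0
  have hfree0 : ∀ y ∉ τ.dom, FinDepth (solW τ (fun _ => C) y) := by
    intro y hy
    rw [solW_not_dom hy]
    exact hCfin
  -- part (a)
  have parta : τ.hvars ⊆ σ.hvars := by
    intro x hxτ
    by_contra hxσ
    exact not_hvars_infinite hσ hfixσ0 hxσ (hvars_finDepth' hfixτ0 hfree0 hxτ)
  refine ⟨parta, ?_⟩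
  -- part (b)
  rintro y ⟨hg, hh⟩
  obtain ⟨nh, hyn⟩ := Set.mem_iUnion.mp hh
  -- y ∈ hvars τ
  have hyhτ : y ∈ τ.hvars := by
    by_contra hyh
    exact not_hvars_infinite hτ hfixτ0 hyh (gh_finDepth hfixσ0 nh y hyn hg)
  -- y ∈ dom τ
  have hydτ : y ∈ τ.dom := by
    by_contra hyd
    set v2 : ℕ → TreeT Sg := fun z => if z = y then D else C with hv2
    have hfixτ2 : ∀ z ∈ τ.dom, solW τ v2 z = evalAtT (solW τ v2) (τ.map z) :=
      fun z hz => solW_dom hz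
    have hfixσ2 := key _ hfixτ2
    have heq := gh_unique hfixσ0 hfixσ2 nh y hyn hg
    rw [solW_not_dom hyd, solW_not_dom hyd] at heq
    apply hCD
    have hCy : (fun _ : ℕ => C) y = C := rfl
    have hDy : v2 y = D := by simp [hv2]
    rw [← hCy, ← hDy]
    exact heq
  refine ⟨⟨hydτ, ?_⟩, hyhτ⟩
  intro v hv hocc
  by_cases hvd : v ∈ τ.dom
  · rw [occ_empty_of_dom hvd] at hocc
    exact hocc
  · have hocc' : y ∈ τ.occN τ.numBindings v := hocc
    obtain ⟨P, hP⟩ := occ_subtree τ.numBindings y hocc'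
    set v2 : ℕ → TreeT Sg := fun z => if z = v then D else C with hv2
    have hfixτ2 : ∀ z ∈ τ.dom, solW τ v2 z = evalAtT (solW τ v2) (τ.map z) :=
      fun z hz => solW_dom hz
    have hfixσ2 := key _ hfixτ2
    have heq := gh_unique hfixσ0 hfixσ2 nh y hyn hg
    have h0 := hP (solW τ (fun _ => C)) hfixτ0
    have h2 := hP (solW τ v2) hfixτ2
    rw [solW_not_dom hvd] at h0 h2
    have h0' : subAtT (solW τ (fun _ => C) y) P = C := h0
    have h2' : subAtT (solW τ v2 y) P = D := by
      rw [h2]; simp [hv2]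
    exact hCD (by rw [← h0', heq, h2'])
end

section
/- Fix a finite set VI ⊆ Vars. If σ, τ ∈ RSubst and RT ⊢ ∀(σ ↔ τ), then VI ∩ hvars(σ) = VI ∩ hvars(τ); that is, equivalent substitutions in rational solved form have the same finiteness abstraction α_H(σ) = VI ∩ hvars(σ). -/
namespace RTProof3

variable {Sg : Signature}

lemma apply_var (σ : Subst Sg) (y : ℕ) : σ.apply (.var y) = σ.map y := rfl

lemma apply_app (σ : Subst Sg) (f : Sg.Sym) (ts : Fin (Sg.arity f) → HTerm Sg) :
    σ.apply (.app f ts) = .app f (fun i => σ.apply (ts i)) := rfl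

lemma iter_zero (σ : Subst Sg) (t : HTerm Sg) : σ.iter 0 t = t := rfl

lemma iter_succ_left (σ : Subst Sg) (k : ℕ) (t : HTerm Sg) :
    σ.iter (k+1) t = σ.iter k (σ.apply t) := Function.iterate_succ_apply _ _ _

lemma iter_succ_right (σ : Subst Sg) (k : ℕ) (t : HTerm Sg) :
    σ.iter (k+1) t = σ.apply (σ.iter k t) := Function.iterate_succ_apply' _ _ _

lemma iter_app (σ : Subst Sg) (k : ℕ) (f : Sg.Sym) (ts : Fin (Sg.arity f) → HTerm Sg) :
    σ.iter k (.app f ts) = .app f (fun i => σ.iter k (ts i)) := by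
  induction k with
  | zero => rfl
  | succ k ih => rw [iter_succ_right, ih, apply_app]; simp only [← iter_succ_right]

lemma map_nondom {σ : Subst Sg} {y : ℕ} (h : y ∉ σ.dom) : σ.map y = .var y := by
  by_contra hc; exact h hc

lemma iter_var_nondom {σ : Subst Sg} {y : ℕ} (h : y ∉ σ.dom) (k : ℕ) :
    σ.iter k (.var y) = .var y := by
  induction k with
  | zero => rfl
  | succ k ih => rw [iter_succ_right, ih, apply_var, map_nondom h]

lemma varsIn_substRaw (m : ℕ → HTerm Sg) (t : HTerm Sg) :
    (t.substRaw m).varsIn = ⋃ y ∈ t.varsIn, (m y).varsIn := by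
  induction t with
  | var x => simp [HTerm.substRaw, HTerm.varsIn]
  | app f ts ih =>
      simp only [HTerm.substRaw, HTerm.varsIn]
      ext z
      simp only [Set.mem_iUnion]
      constructor
      · rintro ⟨i, hz⟩
        rw [ih i] at hz
        simp only [Set.mem_iUnion] at hz
        obtain ⟨y, hy, hz⟩ := hz
        exact ⟨y, ⟨i, hy⟩, hz⟩
      · rintro ⟨y, ⟨i, hy⟩, hz⟩
        refine ⟨i, ?_⟩
        rw [ih i]
        simp only [Set.mem_iUnion]
        exact ⟨y, hy, hz⟩

lemma varsIn_iter (σ : Subst Sg) (k : ℕ) (t : HTerm Sg) :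
    (σ.iter k t).varsIn = ⋃ y ∈ t.varsIn, (σ.iter k (.var y)).varsIn := by
  induction k generalizing t with
  | zero =>
      simp only [iter_zero]
      ext z
      simp only [Set.mem_iUnion]
      constructor
      · intro hz; exact ⟨z, hz, rfl⟩
      · rintro ⟨y, hy, hz⟩; cases hz; exact hy
  | succ k ih =>
      rw [iter_succ_left]
      rw [ih]
      show ⋃ y ∈ (HTerm.substRaw σ.map t).varsIn, _ = _
      rw [varsIn_substRaw]
      ext z
      simp only [Set.mem_iUnion]
      constructor
      · rintro ⟨y, ⟨x, hx, hy⟩, hz⟩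
        refine ⟨x, hx, ?_⟩
        rw [iter_succ_left, ih (σ.apply (.var x))]
        simp only [Set.mem_iUnion]
        exact ⟨y, hy, hz⟩
      · rintro ⟨x, hx, hz⟩
        rw [iter_succ_left, ih (σ.apply (.var x))] at hz
        simp only [Set.mem_iUnion] at hz
        obtain ⟨y, hy, hz⟩ := hz
        exact ⟨y, ⟨x, hx, hy⟩, hz⟩

lemma hvarsN_succ (σ : Subst Sg) (n : ℕ) :
    σ.hvarsN (n+1) = σ.hvarsN n ∪ {y | y ∈ σ.dom ∧ (σ.map y).varsIn ⊆ σ.hvarsN n} := rfl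

lemma hvarsN_mono (σ : Subst Sg) {m n : ℕ} (h : m ≤ n) : σ.hvarsN m ⊆ σ.hvarsN n := by
  induction h with
  | refl => exact subset_rfl
  | step h ih => exact ih.trans (by rw [hvarsN_succ]; exact Set.subset_union_left)

lemma hvarsN_iter (σ : Subst Sg) :
    ∀ n, ∀ y ∈ σ.hvarsN n, ∀ z ∈ (σ.iter n (.var y)).varsIn, z ∉ σ.dom := by
  intro n
  induction n with
  | zero =>
      intro y hy z hz
      simp only [iter_zero, HTerm.varsIn, Set.mem_singleton_iff] at hz
      subst hz; exact hy
  | succ n ih =>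
      intro y hy z hz
      rcases hy with hy | ⟨hyd, hsub⟩
      · have h0 : ∀ w ∈ (σ.iter n (.var y)).varsIn, w ∉ σ.dom := ih y hy
        have : σ.iter (n+1) (.var y) = σ.iter n (.var y) := by
          rw [iter_succ_right]
          have hfix : ∀ u : HTerm Sg, (∀ w ∈ u.varsIn, w ∉ σ.dom) → σ.apply u = u := by
            intro u
            induction u with
            | var x => intro h; exact map_nondom (h x (by simp [HTerm.varsIn]))
            | app f ts ihts =>
                intro h
                rw [apply_app]
                congr 1
                funext i
                exact ihts i (fun w hw => h w (by exact Set.mem_iUnion.2 ⟨i, hw⟩))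
          exact hfix _ h0
        rw [this] at hz
        exact h0 z hz
      · rw [iter_succ_left, apply_var, varsIn_iter] at hz
        simp only [Set.mem_iUnion] at hz
        obtain ⟨w, hw, hz⟩ := hz
        exact ih w (hsub hw) z hz

lemma iter_hvarsN (σ : Subst Sg) :
    ∀ k, ∀ y, (∀ z ∈ (σ.iter k (.var y)).varsIn, z ∉ σ.dom) → y ∈ σ.hvarsN k := by
  intro k
  induction k with
  | zero =>
      intro y h
      exact h y (by simp [iter_zero, HTerm.varsIn])
  | succ k ih =>
      intro y h
      by_cases hy : y ∈ σ.dom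
      · rw [hvarsN_succ]
        refine Or.inr ⟨hy, fun z hz => ?_⟩
        refine ih z (fun w hw => h w ?_)
        rw [iter_succ_left, apply_var, varsIn_iter]
        simp only [Set.mem_iUnion]
        exact ⟨z, hz, hw⟩
      · exact hvarsN_mono σ (Nat.zero_le _) hy

lemma mem_hvars_iff (σ : Subst Sg) (y : ℕ) :
    y ∈ σ.hvars ↔ ∃ k, ∀ z ∈ (σ.iter k (.var y)).varsIn, z ∉ σ.dom := by
  constructor
  · rintro hy
    obtain ⟨_, ⟨n, rfl⟩, hn⟩ := hy
    exact ⟨n, hvarsN_iter σ n y hn⟩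
  · rintro ⟨k, hk⟩
    exact Set.mem_iUnion.2 ⟨k, iter_hvarsN σ k y hk⟩

/-! The structure of (arbitrary, possibly non-well-formed) labelings. -/

/-- Carrier: labeling functions. -/
abbrev C (Sg : Signature) := List ℕ → Option (Sg.Sym ⊕ ℕ)

def Mstruc (Sg : Signature) : Struc Sg where
  carrier := C Sg
  interp f g := fun p => match p with
    | [] => some (Sum.inl f)
    | i :: q => if h : i < Sg.arity f then g ⟨i, h⟩ q else none

lemma eval_var (v : ℕ → C Sg) (y : ℕ) :
    (HTerm.var y).eval (Mstruc Sg) v = v y := rfl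

lemma eval_app_nil (v : ℕ → C Sg) (f : Sg.Sym) (ts : Fin (Sg.arity f) → HTerm Sg) :
    (HTerm.app f ts).eval (Mstruc Sg) v [] = some (Sum.inl f) := rfl

lemma eval_app_cons (v : ℕ → C Sg) (f : Sg.Sym) (ts : Fin (Sg.arity f) → HTerm Sg)
    (i : ℕ) (q : List ℕ) :
    (HTerm.app f ts).eval (Mstruc Sg) v (i :: q) =
      if h : i < Sg.arity f then (ts ⟨i, h⟩).eval (Mstruc Sg) v q else none := rfl

lemma eval_substRaw {A : Struc Sg} (v : ℕ → A.carrier) (m : ℕ → HTerm Sg)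
    (t : HTerm Sg) :
    (t.substRaw m).eval A v = t.eval A (fun y => (m y).eval A v) := by
  induction t with
  | var x => rfl
  | app f ts ih =>
      show (HTerm.app f (fun i => (ts i).substRaw m)).eval A v = _
      show A.interp f _ = A.interp f _
      congr 1
      funext i
      exact ih i

lemma eval_congr_val {A : Struc Sg} {v w : ℕ → A.carrier} (h : ∀ y, v y = w y)
    (t : HTerm Sg) : t.eval A v = t.eval A w := by
  have : v = w := funext h
  rw [this]

lemma sat_eqs_iff {A : Struc Sg} (w : ℕ → A.carrier) (σ : Subst Sg) :
    A.Sat w σ.eqs ↔ ∀ x ∈ σ.dom, w x = (σ.map x).eval A w := by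
  constructor
  · intro h x hx
    exact h (HTerm.var x, σ.map x) ⟨x, hx, rfl⟩
  · rintro h e ⟨x, hx, rfl⟩
    exact h x hx

lemma eval_apply_of_sat {A : Struc Sg} {w : ℕ → A.carrier} {σ : Subst Sg}
    (hsat : A.Sat w σ.eqs) (t : HTerm Sg) :
    (σ.apply t).eval A w = t.eval A w := by
  show (t.substRaw σ.map).eval A w = _
  rw [eval_substRaw]
  refine eval_congr_val (fun y => ?_) t
  by_cases hy : y ∈ σ.dom
  · exact ((sat_eqs_iff w σ).1 hsat y hy).symm
  · rw [map_nondom hy]; rfl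

lemma eval_iter_of_sat {A : Struc Sg} {w : ℕ → A.carrier} {σ : Subst Sg}
    (hsat : A.Sat w σ.eqs) (k : ℕ) (t : HTerm Sg) :
    (σ.iter k t).eval A w = t.eval A w := by
  induction k with
  | zero => rfl
  | succ k ih => rw [iter_succ_right, eval_apply_of_sat hsat, ih]

/-! Depth-bounded occurrence of domain variables. -/

def DomAt (σ : Subst Sg) : HTerm Sg → ℕ → Prop
  | .var y, _ => y ∈ σ.dom
  | .app _ _, 0 => False
  | .app _ ts, n+1 => ∃ i, DomAt σ (ts i) n

lemma not_domAt_apply {σ : Subst Sg} {t : HTerm Sg} {n : ℕ}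
    (h : ¬ DomAt σ t n) : ¬ DomAt σ (σ.apply t) n := by
  induction t generalizing n with
  | var y =>
      have hy : y ∉ σ.dom := h
      rw [apply_var, map_nondom hy]; exact h
  | app f ts ih =>
      rw [apply_app]
      cases n with
      | zero => exact fun hc => hc
      | succ n =>
          rintro ⟨i, hi⟩
          exact h ⟨i, (by_contra fun hc => (ih i hc) hi)⟩

lemma not_domAt_iter {σ : Subst Sg} {t : HTerm Sg} {n k : ℕ}
    (h : ¬ DomAt σ (σ.iter k t) n) {k' : ℕ} (hk : k ≤ k') :
    ¬ DomAt σ (σ.iter k' t) n := by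
  induction hk with
  | refl => exact h
  | step hk ih => rw [iter_succ_right]; exact not_domAt_apply ih

/-- One more application does not change labels above the depth of all
domain variables. -/
lemma eval_apply_eq_of_not_domAt {σ : Subst Sg} (v : ℕ → C Sg) :
    ∀ (t : HTerm Sg) (n : ℕ), ¬ DomAt σ t n → ∀ p : List ℕ, p.length ≤ n →
      (σ.apply t).eval (Mstruc Sg) v p = t.eval (Mstruc Sg) v p := by
  intro t
  induction t with
  | var y =>
      intro n h p _
      have hy : y ∉ σ.dom := h
      rw [apply_var, map_nondom hy]
  | app f ts ih =>
      intro n h p hp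
      rw [apply_app]
      match p with
      | [] => rfl
      | i :: q =>
          rw [eval_app_cons, eval_app_cons]
          by_cases hi : i < Sg.arity f
          · rw [dif_pos hi, dif_pos hi]
            match n with
            | 0 => exact absurd hp (by simp)
            | n + 1 =>
                have hq : q.length ≤ n := by simpa using hp
                exact ih ⟨i, hi⟩ n (fun hc => h ⟨⟨i, hi⟩, hc⟩) q hq
          · rw [dif_neg hi, dif_neg hi]

lemma eval_iter_eq_of_not_domAt {σ : Subst Sg} (v : ℕ → C Sg)
    {t : HTerm Sg} {n k : ℕ} (h : ¬ DomAt σ (σ.iter k t) n) {k' : ℕ} (hk : k ≤ k')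
    {p : List ℕ} (hp : p.length ≤ n) :
    (σ.iter k' t).eval (Mstruc Sg) v p = (σ.iter k t).eval (Mstruc Sg) v p := by
  induction hk with
  | refl => rfl
  | @step k' hk ih =>
      rw [iter_succ_right]
      rw [eval_apply_eq_of_not_domAt v _ n (not_domAt_iter h hk) p hp]
      exact ih

/-- Labels above the depth of all domain variables only depend on the values
of non-domain variables. -/
lemma eval_eq_of_agree_nondom {σ : Subst Sg} {v v' : ℕ → C Sg}
    (hag : ∀ z ∉ σ.dom, v z = v' z) :
    ∀ (t : HTerm Sg) (n : ℕ), ¬ DomAt σ t n → ∀ p : List ℕ, p.length ≤ n →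
      t.eval (Mstruc Sg) v p = t.eval (Mstruc Sg) v' p := by
  intro t
  induction t with
  | var y =>
      intro n h p _
      have hy : y ∉ σ.dom := h
      rw [eval_var, eval_var, hag y hy]
  | app f ts ih =>
      intro n h p hp
      match p with
      | [] => rfl
      | i :: q =>
          rw [eval_app_cons, eval_app_cons]
          by_cases hi : i < Sg.arity f
          · rw [dif_pos hi, dif_pos hi]
            match n with
            | 0 => exact absurd hp (by simp)
            | n + 1 =>
                have hq : q.length ≤ n := by simpa using hp
                exact ih ⟨i, hi⟩ n (fun hc => h ⟨⟨i, hi⟩, hc⟩) q hq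
          · rw [dif_neg hi, dif_neg hi]

lemma domAt_var {σ : Subst Sg} {y n} : DomAt σ (.var y) n ↔ y ∈ σ.dom := Iff.rfl
lemma domAt_app_zero {σ : Subst Sg} {f} {ts : Fin (Sg.arity f) → HTerm Sg} :
    DomAt σ (.app f ts) 0 ↔ False := Iff.rfl
lemma domAt_app_succ {σ : Subst Sg} {f} {ts : Fin (Sg.arity f) → HTerm Sg} {n} :
    DomAt σ (.app f ts) (n+1) ↔ ∃ i, DomAt σ (ts i) n := Iff.rfl

lemma iter_add (σ : Subst Sg) (a b : ℕ) (t : HTerm Sg) :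
    σ.iter (a + b) t = σ.iter a (σ.iter b t) := Function.iterate_add_apply _ a b t

/-- In a substitution in rational solved form, chains of variable-to-variable
bindings terminate: iterating eventually leaves the "domain variable" state. -/
lemma exists_iter_not_domvar {σ : Subst Sg} (hσ : σ.InRSF) (t : HTerm Sg) :
    ∃ K, ∀ z ∈ σ.dom, σ.iter K t ≠ .var z := by
  by_contra hcon
  push_neg at hcon
  choose seq hdom hseq using hcon
  have hstep : ∀ k, σ.map (seq k) = .var (seq (k+1)) := by
    intro k
    have h2 := hseq (k+1)
    rw [iter_succ_right, hseq k, apply_var] at h2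
    exact h2
  have hfin : σ.dom.Finite := σ.finite
  have hninj : ¬ Function.Injective seq := by
    intro hinj
    exact hfin.not_infinite (Set.infinite_of_injective_forall_mem hinj hdom)
  have hex : ∃ j, ∃ i, i < j ∧ seq i = seq j := by
    rw [Function.not_injective_iff] at hninj
    obtain ⟨a, b, hab, hne⟩ := hninj
    rcases lt_or_gt_of_ne hne with h | h
    · exact ⟨b, a, h, hab⟩
    · exact ⟨a, b, h, hab.symm⟩
  classical
  obtain ⟨i, hij, hrep⟩ := Nat.find_spec hex
  set j := Nat.find hex with hj
  have hinj_lt : ∀ a b, a < j → b < j → seq a = seq b → a = b := by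
    intro a b ha hb he
    by_contra hne
    rcases Nat.lt_or_ge a b with h | h
    · exact Nat.find_min hex hb ⟨a, h, he⟩
    · have h' : b < a := lt_of_le_of_ne h (fun hc => hne hc.symm)
      exact Nat.find_min hex ha ⟨b, h', he.symm⟩
  set m := j - i with hm
  have him : i + m = j := Nat.add_sub_cancel' (le_of_lt hij)
  have hm1 : 1 ≤ m := by omega
  rcases Nat.lt_or_ge 1 m with hm2 | hm2'
  · -- genuine cycle of length m ≥ 2: contradicts RSF
    set x : ℕ → ℕ := fun a => seq (i + a) with hx
    have hcyc : ∀ a < m, σ.map (x a) = .var (x ((a + 1) % m)) := by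
      intro a ha
      rcases Nat.lt_or_ge (a + 1) m with h | h
      · rw [Nat.mod_eq_of_lt h]
        show σ.map (seq (i + a)) = .var (seq (i + (a + 1)))
        rw [← Nat.add_assoc]
        exact hstep (i + a)
      · have hma : a + 1 = m := by omega
        rw [hma, Nat.mod_self]
        show σ.map (seq (i + a)) = .var (seq (i + 0))
        have : seq (i + 0) = seq (i + a + 1) := by
          rw [Nat.add_zero]
          rw [show i + a + 1 = j by omega]
          exact hrep
        rw [this]
        exact hstep (i + a)
    set S : Set (ℕ × HTerm Sg) :=
      {p | ∃ a < m, p = (x a, HTerm.var (x ((a + 1) % m)))} with hS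
    have hsub : S ⊆ σ.bindings := by
      rintro p ⟨a, ha, rfl⟩
      exact ⟨hdom (i + a), (hcyc a ha).symm⟩
    refine hσ S hsub ⟨m, hm2, x, ?_, rfl⟩
    intro a b ha hb he
    have := hinj_lt (i + a) (i + b) (by omega) (by omega) he
    omega
  · -- m = 1: self-binding, contradicts membership in dom
    have hm1' : m = 1 := by omega
    have : σ.map (seq i) = .var (seq i) := by
      have h1 := hstep i
      have : seq (i + 1) = seq i := by
        rw [show i + 1 = j by omega]
        exact hrep.symm
      rw [this] at h1
      exact h1
    exact (hdom i) this

/-- Stabilization: every term eventually has no domain variables above any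
fixed depth. -/
lemma exists_iter_not_domAt {σ : Subst Sg} (hσ : σ.InRSF) :
    ∀ (n : ℕ) (t : HTerm Sg), ∃ K, ¬ DomAt σ (σ.iter K t) n := by
  intro n
  induction n with
  | zero =>
      intro t
      obtain ⟨K, hK⟩ := exists_iter_not_domvar hσ t
      refine ⟨K, ?_⟩
      cases h : σ.iter K t with
      | var z => exact fun hd => hK z hd h
      | app f ts => exact fun hd => hd
  | succ n ih =>
      intro t
      obtain ⟨K0, hK0⟩ := exists_iter_not_domvar hσ t
      cases h : σ.iter K0 t with
      | var z =>
          have hz : z ∉ σ.dom := fun hc => hK0 z hc h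
          exact ⟨K0, by rw [h]; exact hz⟩
      | app f ts =>
          choose Ks hKs using fun i => ih (ts i)
          classical
          set m := Finset.univ.sup Ks with hm
          refine ⟨m + K0, ?_⟩
          rw [iter_add, h, iter_app]
          rintro ⟨i, hi⟩
          exact not_domAt_iter (hKs i) (Finset.le_sup (Finset.mem_univ i)) hi

/-! The canonical solution of a substitution in rational solved form, for a
given valuation of the parameters. -/

noncomputable def Kof {σ : Subst Sg} (hσ : σ.InRSF) (n : ℕ) (t : HTerm Sg) : ℕ :=
  (exists_iter_not_domAt hσ n t).choose

lemma Kof_spec {σ : Subst Sg} (hσ : σ.InRSF) (n : ℕ) (t : HTerm Sg) :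
    ¬ DomAt σ (σ.iter (Kof hσ n t) t) n :=
  (exists_iter_not_domAt hσ n t).choose_spec

noncomputable def sol {σ : Subst Sg} (hσ : σ.InRSF) (v : ℕ → C Sg) : ℕ → C Sg :=
  fun y p => (σ.iter (Kof hσ p.length (.var y)) (.var y)).eval (Mstruc Sg) v p

lemma sol_eq {σ : Subst Sg} (hσ : σ.InRSF) (v : ℕ → C Sg) {y k : ℕ} {p : List ℕ}
    (h : ¬ DomAt σ (σ.iter k (.var y)) p.length) :
    sol hσ v y p = (σ.iter k (.var y)).eval (Mstruc Sg) v p := by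
  have h1 := Kof_spec hσ p.length (HTerm.var y)
  show (σ.iter (Kof hσ p.length (.var y)) (.var y)).eval (Mstruc Sg) v p = _
  rcases le_total k (Kof hσ p.length (.var y)) with hk | hk
  · exact eval_iter_eq_of_not_domAt v h hk le_rfl
  · exact (eval_iter_eq_of_not_domAt v h1 hk le_rfl).symm

lemma eval_sol {σ : Subst Sg} (hσ : σ.InRSF) (v : ℕ → C Sg) :
    ∀ (t : HTerm Sg) (p : List ℕ) (k : ℕ), ¬ DomAt σ (σ.iter k t) p.length →
      t.eval (Mstruc Sg) (sol hσ v) p = (σ.iter k t).eval (Mstruc Sg) v p := by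
  intro t
  induction t with
  | var y =>
      intro p k h
      rw [eval_var]
      exact sol_eq hσ v h
  | app f ts ih =>
      intro p k h
      rw [iter_app] at h ⊢
      match p with
      | [] => rfl
      | i :: q =>
          rw [eval_app_cons, eval_app_cons]
          by_cases hi : i < Sg.arity f
          · rw [dif_pos hi, dif_pos hi]
            exact ih ⟨i, hi⟩ q k (fun hc => h ⟨⟨i, hi⟩, hc⟩)
          · rw [dif_neg hi, dif_neg hi]

lemma sol_sat {σ : Subst Sg} (hσ : σ.InRSF) (v : ℕ → C Sg) :
    (Mstruc Sg).Sat (sol hσ v) σ.eqs := by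
  refine (sat_eqs_iff (A := Mstruc Sg) (sol hσ v) σ).2 ?_
  intro x _
  funext p
  have hk := Kof_spec hσ p.length (σ.map x)
  have h2 : ¬ DomAt σ (σ.iter (Kof hσ p.length (σ.map x) + 1) (.var x)) p.length := by
    rw [iter_succ_left, apply_var]; exact hk
  calc sol hσ v x p
      = (σ.iter (Kof hσ p.length (σ.map x) + 1) (.var x)).eval (Mstruc Sg) v p :=
        sol_eq hσ v h2
    _ = (σ.iter (Kof hσ p.length (σ.map x)) (σ.map x)).eval (Mstruc Sg) v p := by
        rw [iter_succ_left, apply_var]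
    _ = (σ.map x).eval (Mstruc Sg) (sol hσ v) p := (eval_sol hσ v _ p _ hk).symm

lemma sol_agree {σ : Subst Sg} (hσ : σ.InRSF) (v : ℕ → C Sg) {y : ℕ}
    (h : y ∉ σ.dom) : sol hσ v y = v y := by
  funext p
  have h0 : ¬ DomAt σ (σ.iter 0 (.var y)) p.length := by
    rw [iter_zero]; exact h
  rw [sol_eq hσ v h0, iter_zero, eval_var]

lemma sol_unique {σ : Subst Sg} (hσ : σ.InRSF) (v : ℕ → C Sg) (w' : ℕ → C Sg)
    (hag : ∀ x ∉ σ.dom, w' x = v x) (hsat : (Mstruc Sg).Sat w' σ.eqs) :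
    w' = sol hσ v := by
  funext y p
  have hk := Kof_spec hσ p.length (HTerm.var y)
  have h1 : w' y p = (σ.iter (Kof hσ p.length (.var y)) (.var y)).eval (Mstruc Sg) w' p := by
    rw [eval_iter_of_sat hsat, eval_var]
  rw [h1, eval_eq_of_agree_nondom (fun z hz => hag z hz) _ p.length hk p le_rfl]
  exact (sol_eq hσ v hk).symm

/-- The concrete model of RT. -/
noncomputable def Mmodel (Sg : Signature) : RTModel Sg where
  struc := Mstruc Sg
  inj := by
    intro f a b hab
    funext i q
    have h := congrFun hab (i.1 :: q)
    show a ⟨i.1, i.2⟩ q = b ⟨i.1, i.2⟩ q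
    have ha : (Mstruc Sg).interp f a (i.1 :: q) = a ⟨i.1, i.2⟩ q := dif_pos i.2
    have hb : (Mstruc Sg).interp f b (i.1 :: q) = b ⟨i.1, i.2⟩ q := dif_pos i.2
    rw [← ha, ← hb, h]
  distinct := by
    intro f g a b hfg hc
    have h := congrFun hc []
    have : (some (Sum.inl f) : Option (Sg.Sym ⊕ ℕ)) = some (Sum.inl g) := h
    simp only [Option.some.injEq, Sum.inl.injEq] at this
    exact hfg this
  uniqueness := by
    intro σ hσ v
    refine ⟨sol hσ v, ⟨fun x hx => sol_agree hσ v hx, sol_sat hσ v⟩, ?_⟩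
    rintro w' ⟨hag, hsat⟩
    exact sol_unique hσ v w' hag hsat

/-! Finiteness of solution trees versus `hvars`. -/

def v0 : ℕ → C Sg := fun z => (HTerm.var z).labelAt

lemma v0_finite (z : ℕ) : treeFinite (v0 (Sg := Sg) z) := by
  refine Set.Finite.subset (Set.finite_singleton ([] : List ℕ)) ?_
  intro p hp
  match p with
  | [] => rfl
  | i :: q =>
      exact absurd hp (by show ¬ (Option.isSome none = true); simp)

lemma finite_eval (v : ℕ → C Sg) :
    ∀ t : HTerm Sg, (∀ z ∈ t.varsIn, treeFinite (v z)) →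
      treeFinite (t.eval (Mstruc Sg) v) := by
  intro t
  induction t with
  | var y => intro h; exact h y rfl
  | app f ts ih =>
      intro h
      have hsub : {p | ((HTerm.app f ts).eval (Mstruc Sg) v p).isSome} ⊆
          insert [] (⋃ i : Fin (Sg.arity f),
            (fun q => (i : ℕ) :: q) '' {q | ((ts i).eval (Mstruc Sg) v q).isSome}) := by
        intro p hp
        match p with
        | [] => exact Set.mem_insert _ _
        | i :: q =>
            rw [Set.mem_setOf_eq, eval_app_cons] at hp
            by_cases hi : i < Sg.arity f
            · rw [dif_pos hi] at hp
              exact Set.mem_insert_of_mem _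
                (Set.mem_iUnion.2 ⟨⟨i, hi⟩, ⟨q, hp, rfl⟩⟩)
            · rw [dif_neg hi] at hp
              exact absurd hp (by simp)
      refine Set.Finite.subset ?_ hsub
      refine Set.Finite.insert _ (Set.finite_iUnion fun i => ?_)
      exact (ih i (fun z hz => h z (Set.mem_iUnion.2 ⟨i, hz⟩))).image _

lemma finite_of_hvars {σ : Subst Sg} (hσ : σ.InRSF) {x : ℕ} (hx : x ∈ σ.hvars) :
    treeFinite (sol hσ v0 x) := by
  obtain ⟨k, hk⟩ := (mem_hvars_iff σ x).1 hx
  have h1 : sol hσ v0 x = (σ.iter k (.var x)).eval (Mstruc Sg) (sol hσ v0) := by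
    rw [eval_iter_of_sat (sol_sat hσ v0), eval_var]
  rw [h1]
  refine finite_eval _ _ (fun z hz => ?_)
  rw [sol_agree hσ v0 (hk z hz)]
  exact v0_finite z

lemma node_at {σ : Subst Sg} (v : ℕ → C Sg) :
    ∀ (t : HTerm Sg) (n : ℕ), (∃ z ∈ t.varsIn, z ∈ σ.dom) → ¬ DomAt σ t n →
      ∃ p : List ℕ, p.length = n ∧ (t.eval (Mstruc Sg) v p).isSome := by
  intro t
  induction t with
  | var y =>
      rintro n ⟨z, hz, hzd⟩ h
      have : z = y := hz
      subst this
      exact absurd hzd h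
  | app f ts ih =>
      intro n hz h
      match n with
      | 0 => exact ⟨[], rfl, by rw [eval_app_nil]; rfl⟩
      | n + 1 =>
          obtain ⟨z, hz, hzd⟩ := hz
          obtain ⟨i, hzi⟩ := Set.mem_iUnion.1 hz
          obtain ⟨q, hq, hsome⟩ := ih i n ⟨z, hzi, hzd⟩ (fun hc => h ⟨i, hc⟩)
          refine ⟨(i : ℕ) :: q, by simp [hq], ?_⟩
          rw [eval_app_cons, dif_pos i.2]
          exact hsome

lemma not_finite_of_not_hvars {τ : Subst Sg} (hτ : τ.InRSF) {w : ℕ → C Sg}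
    (hsat : (Mstruc Sg).Sat w τ.eqs) {x : ℕ} (hx : x ∉ τ.hvars) :
    ¬ treeFinite (w x) := by
  have hx' : ∀ k, ∃ z ∈ (τ.iter k (.var x)).varsIn, z ∈ τ.dom := by
    rw [mem_hvars_iff] at hx
    push_neg at hx
    exact hx
  have key : ∀ n, ∃ p : List ℕ, p.length = n ∧ (w x p).isSome := by
    intro n
    have hk := Kof_spec hτ n (HTerm.var x)
    obtain ⟨p, hp, hsome⟩ := node_at w _ n (hx' _) hk
    refine ⟨p, hp, ?_⟩
    have h1 : w x p = (τ.iter (Kof hτ n (.var x)) (.var x)).eval (Mstruc Sg) w p := by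
      rw [eval_iter_of_sat hsat, eval_var]
    rw [h1]
    exact hsome
  intro hfin
  choose pf hlen hsome using key
  have hinj : Function.Injective pf := by
    intro a b hab
    rw [← hlen a, ← hlen b, hab]
  exact (Set.infinite_of_injective_forall_mem (s := {p | (w x p).isSome})
    hinj (fun n => hsome n)) hfin

lemma hvars_subset {σ τ : Subst Sg} (hσ : σ.InRSF) (hτ : τ.InRSF)
    (heq : RTEquiv σ.eqs τ.eqs) : σ.hvars ⊆ τ.hvars := by
  intro x hx
  by_contra hxt
  have hsatσ := sol_sat hσ (v0 (Sg := Sg))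
  have hsatτ : (Mstruc Sg).Sat (sol hσ v0) τ.eqs :=
    (heq (Mmodel Sg) (sol hσ v0)).1 hsatσ
  exact not_finite_of_not_hvars hτ hsatτ hxt (finite_of_hvars hσ hx)

end RTProof3

/-- Equivalent substitutions in rational solved form have the
same finiteness abstraction `α_H(σ) = VI ∩ hvars(σ)`. -/
theorem equiv_same_finiteness_abstraction
    (Sg : Signature) (hconst : ∃ f, Sg.arity f = 0) (hposar : ∃ f, 0 < Sg.arity f)
    (VI : Set ℕ) (hVI : VI.Finite)
    (σ τ : Subst Sg) (hσ : σ.InRSF) (hτ : τ.InRSF)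
    (heq : RTEquiv σ.eqs τ.eqs) :
    VI ∩ σ.hvars = VI ∩ τ.hvars := by
  have h1 := RTProof3.hvars_subset hσ hτ heq
  have h2 := RTProof3.hvars_subset hτ hσ (fun A v => (heq A v).symm)
  rw [subset_antisymm h1 h2]
end

section
/- Let h ⊆ VI and φ ∈ Bfun, and let h' = true(φ ∧ ⋀h). Then γ_H(h) ∩ γ_FD(φ) = γ_H(h') ∩ γ_FD(φ); that is, the finite-tree dependency information in φ can be used to enlarge the set of variables known to be bound to finite terms without changing the set of described substitutions. -/
/-- The identity substitution. -/
def idSubst (Sg : Signature) : Subst Sg where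
  map := HTerm.var
  finite := by simp [Set.finite_empty, Set.eq_empty_iff_forall_notMem]

lemma idSubst_eqs (Sg : Signature) : (idSubst Sg).eqs = ∅ := by
  ext e
  simp [Subst.eqs, Subst.dom, idSubst]

lemma idSubst_inRSF (Sg : Signature) : (idSubst Sg).InRSF := by
  intro S hS hc
  obtain ⟨n, hn, x, _, hSeq⟩ := hc
  have : (x 0, HTerm.var (x (1 % n))) ∈ S := by
    rw [hSeq]; exact ⟨0, by omega, rfl⟩
  have := hS this
  simp [Subst.bindings, Subst.dom, idSubst] at this

lemma self_mem_downRT {Sg : Signature} (σ : Subst Sg) (hσ : σ.InRSF) :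
    σ ∈ downRT σ := by
  refine ⟨idSubst Sg, idSubst_inRSF Sg, hσ, ?_, ?_⟩
  · intro A v
    constructor
    · intro hs e he
      rcases he with he | he
      · exact hs e he
      · rw [idSubst_eqs] at he; exact absurd he (Set.notMem_empty e)
    · intro hs e he
      exact hs e (Or.inl he)
  · intro y hy
    rcases hy with hy | hy
    · -- y ∈ dom σ
      refine Set.mem_biUnion (s := σ.eqs ∪ (idSubst Sg).eqs)
        (x := (HTerm.var y, σ.map y)) (Or.inl ⟨y, hy, rfl⟩) ?_
      left; simp [HTerm.varsIn]
    · simp only [Set.mem_iUnion] at hy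
      obtain ⟨x, hx, hyx⟩ := hy
      refine Set.mem_biUnion (s := σ.eqs ∪ (idSubst Sg).eqs)
        (x := (HTerm.var x, σ.map x)) (Or.inl ⟨x, hx, rfl⟩) ?_
      right; exact hyx

/-- With `h' = true(φ ∧ ⋀h)`,
`γ_H(h) ∩ γ_FD(φ) = γ_H(h') ∩ γ_FD(φ)`. -/
theorem gammaH_improved_by_gammaFD
    (Sg : Signature) (hconst : ∃ f, Sg.arity f = 0) (hposar : ∃ f, 0 < Sg.arity f)
    (VI : Set ℕ) (hVI : VI.Finite) (h : Set ℕ) (hh : h ⊆ VI) (φ : BFun) :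
    gammaH (Sg := Sg) h ∩ gammaFD φ
      = gammaH (Sg := Sg) (trueVars VI (bAnd φ (bConj h))) ∩ gammaFD φ := by
  have hsub : h ⊆ trueVars VI (bAnd φ (bConj h)) :=
    fun x hx => ⟨hh hx, fun a ha => ha.2 x hx⟩
  ext σ
  simp only [Set.mem_inter_iff, gammaH, gammaFD, Set.mem_setOf_eq]
  constructor
  · rintro ⟨⟨hrsf, hhv⟩, hfd⟩
    refine ⟨⟨hrsf, ?_⟩, hfd⟩
    intro x hx
    have hφ : φ σ.hval := hfd.2 σ (self_mem_downRT σ hrsf)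
    exact hx.2 σ.hval ⟨hφ, fun y hy => hhv hy⟩
  · rintro ⟨⟨hrsf, hhv⟩, hfd⟩
    exact ⟨⟨hrsf, fun x hx => hhv (hsub hx)⟩, hfd⟩
end

section
/- Let h ⊆ VI and φ ∈ Bfun. If γ_H(h) ∩ γ_FD(φ) ≠ ∅, then h ∩ false(φ ∧ ⋀h) = ∅. -/
/-- If `γ_H(h) ∩ γ_FD(φ) ≠ ∅` then
`h ∩ false(φ ∧ ⋀h) = ∅`. -/
theorem gammaH_gammaFD_consistency
    (Sg : Signature) (hconst : ∃ f, Sg.arity f = 0) (hposar : ∃ f, 0 < Sg.arity f)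
    (VI : Set ℕ) (hVI : VI.Finite) (h : Set ℕ) (hh : h ⊆ VI) (φ : BFun)
    (hne : (gammaH (Sg := Sg) h ∩ gammaFD φ).Nonempty) :
    h ∩ falseVars VI (bAnd φ (bConj h)) = ∅ := by
  obtain ⟨σ, ⟨hrsf, hhvars⟩, -, hfd⟩ := hne
  have hself : σ ∈ downRT σ := by
    refine ⟨σ, hrsf, ?_⟩
    rw [Set.union_self]
    refine ⟨hrsf, fun A v => Iff.rfl, ?_⟩
    rintro y (hy | hy)
    · exact Set.mem_biUnion ⟨y, hy, rfl⟩ (Or.inl rfl)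
    · obtain ⟨s, ⟨x, rfl⟩, hs⟩ := hy
      obtain ⟨s', ⟨hx, rfl⟩, hy⟩ := hs
      exact Set.mem_biUnion ⟨x, hx, rfl⟩ (Or.inr hy)
  have hφ : φ σ.hval := hfd σ hself
  ext x
  simp only [Set.mem_inter_iff, Set.mem_empty_iff_false, iff_false]
  rintro ⟨hxh, -, hfalse⟩
  exact hfalse σ.hval ⟨hφ, fun y hy => hhvars hy⟩ (hhvars hxh)
end
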